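/- arXiv:1801.04165 — 8 statements merged into one kernel-verified Lean document; each statement's English description precedes it below -/
import Mathlib

section
/- The ordinary multinomial satisfies the alternating sum formula ⟨N,k⟩_s = Σ_{i=0}^{⌊k/(s+1)⌋} (-1)^i · C(N,i) · C(k - i(s+1) + N - 1, k - i(s+1)). -/
/-!
In `ℤ⟦T⟧` we have `(1 + T + ⋯ + T^s)^N = (1 - T^(s+1))^N · (1 - T)^(-N)`. Expanding the first
factor by the binomial theorem and the second as `∑ C(j + N - 1, j) T^j`, the coefficient of `T^k`
is the alternating sum over those `i` with `i (s + 1) ≤ k`.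
-/

/-- The ordinary multinomial `⟨N,k⟩ₛ`: the coefficient of `T^k` in `(1+T+⋯+T^s)^N`,
with value `0` for `k < 0`. -/
noncomputable def ordMultinomial (N s : ℕ) (k : ℤ) : ℕ :=
  if 0 ≤ k then
    (((∑ i ∈ Finset.range (s + 1), (Polynomial.X : Polynomial ℕ) ^ i)) ^ N).coeff k.toNat
  else 0

open Finset PowerSeries

namespace PowerSeries

variable {R : Type*} [CommRing R]

theorem geom_sum_X_pow_pow_eq (m N : ℕ) :
    (∑ i ∈ range m, (X : R⟦X⟧) ^ i) ^ N = (1 - X ^ m) ^ N * (invOneSubPow R N).val := by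
  rw [← geom_sum_mul_neg, mul_pow, mul_assoc, ← invOneSubPow_inv_eq_one_sub_pow,
    Units.inv_val, mul_one]

theorem one_sub_X_pow_pow_eq_sum (m N : ℕ) :
    (1 - X ^ m : R⟦X⟧) ^ N = ∑ i ∈ range (N + 1), C ((-1 : R) ^ i * N.choose i) * X ^ (m * i) := by
  rw [sub_eq_add_neg, add_comm, add_pow]
  refine sum_congr rfl fun i _ => ?_
  rw [neg_pow, one_pow, mul_one, ← pow_mul, map_mul, map_pow, map_neg, map_one, map_natCast]
  ring

theorem coeff_X_pow_mul_invOneSubPow {N : ℕ} (hN : 0 < N) (j k : ℕ) :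
    coeff k (X ^ j * (invOneSubPow R N : R⟦X⟧)) =
      if j ≤ k then ((k - j + N - 1).choose (k - j) : R) else 0 := by
  rw [coeff_X_pow_mul', invOneSubPow_val_eq_mk_sub_one_add_choose_of_pos R N hN]
  split_ifs
  · rw [coeff_mk, Nat.choose_symm_add]
    congr 2
    omega
  · rfl

theorem coeff_geom_sum_X_pow_pow {m N : ℕ} (hm : 0 < m) (hN : 0 < N) (k : ℕ) :
    coeff k ((∑ i ∈ range m, (X : R⟦X⟧) ^ i) ^ N) =
      ∑ i ∈ range (k / m + 1),
        (-1) ^ i * N.choose i * ((k - i * m + N - 1).choose (k - i * m) : R) := by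
  set t : ℕ → R := fun i =>
    (-1) ^ i * N.choose i * if m * i ≤ k then ((k - m * i + N - 1).choose (k - m * i) : R) else 0
  have hcoeff : coeff k ((∑ i ∈ range m, (X : R⟦X⟧) ^ i) ^ N) = ∑ i ∈ range (N + 1), t i := by
    simp only [geom_sum_X_pow_pow_eq, one_sub_X_pow_pow_eq_sum, sum_mul, map_sum, mul_assoc,
      coeff_C_mul, coeff_X_pow_mul_invOneSubPow hN, t]
  have hle : ∀ i, m * i ≤ k ↔ i < k / m + 1 := fun i => by
    rw [Nat.lt_succ_iff, Nat.le_div_iff_mul_le hm, mul_comm]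
  have hbig : ∑ i ∈ range (N + 1), t i = ∑ i ∈ range (N + 1 + (k / m + 1)), t i := by
    refine sum_subset (range_subset_range.2 (Nat.le_add_right _ _)) fun i _ hi => ?_
    rw [mem_range, not_lt] at hi
    simp [t, Nat.choose_eq_zero_of_lt (show N < i by omega)]
  have hsmall : ∑ i ∈ range (k / m + 1), t i = ∑ i ∈ range (N + 1 + (k / m + 1)), t i := by
    refine sum_subset (range_subset_range.2 (Nat.le_add_left _ _)) fun i _ hi => ?_
    simp [t, (hle i).not.2 (mem_range.not.1 hi)]
  rw [hcoeff, hbig, ← hsmall]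
  refine sum_congr rfl fun i hi => ?_
  dsimp only [t]
  rw [if_pos ((hle i).2 (mem_range.1 hi)), mul_comm m i]

end PowerSeries

theorem ordMultinomial_natCast_eq_coeff {R : Type*} [CommSemiring R] (N s k : ℕ) :
    (ordMultinomial N s k : R) = coeff k ((∑ i ∈ range (s + 1), (X : R⟦X⟧) ^ i) ^ N) := by
  rw [ordMultinomial, if_pos (Int.natCast_nonneg k), Int.toNat_natCast,
    ← eq_natCast (Nat.castRingHom R), ← Polynomial.coeff_map, ← Polynomial.coeff_coe,
    ← Polynomial.coeToPowerSeries.ringHom_apply]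
  simp only [Polynomial.map_pow, Polynomial.map_sum, Polynomial.map_X, map_pow, map_sum]
  simp only [Polynomial.coeToPowerSeries.ringHom_apply, Polynomial.coe_X]

theorem stmt_2_general (N s k : ℕ) (hN : 1 ≤ N) :
    (ordMultinomial N s k : ℤ) =
      ∑ i ∈ Finset.range (k / (s + 1) + 1),
        (-1 : ℤ) ^ i * N.choose i * (k - i * (s + 1) + N - 1).choose (k - i * (s + 1)) := by
  rw [ordMultinomial_natCast_eq_coeff, coeff_geom_sum_X_pow_pow s.succ_pos hN]

theorem stmt_2 (N s k : ℕ) (hN : 1 ≤ N) (hs : 1 ≤ s) (hk : k ≤ s * N) :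
    (ordMultinomial N s k : ℤ) =
      ∑ i ∈ Finset.range (k / (s + 1) + 1),
        (-1 : ℤ) ^ i * N.choose i * (k - i * (s + 1) + N - 1).choose (k - i * (s + 1)) :=
  stmt_2_general N s k hN
end

section
/- For all N ≥ 2 and s ≥ 1, the sequence of ordinary multinomials is strictly increasing up to the middle: ⟨N,k⟩_s < ⟨N,k+1⟩_s for all 0 ≤ k < ⌊sN/2⌋. -/
open Finset Polynomial

namespace ordMultinomial

variable {N s : ℕ}

lemma of_neg {k : ℤ} (hk : k < 0) : ordMultinomial N s k = 0 := by
  simp [ordMultinomial, hk.not_ge]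

lemma zero_left (s : ℕ) (k : ℤ) : ordMultinomial 0 s k = if k = 0 then 1 else 0 := by
  simp only [ordMultinomial, pow_zero, coeff_one]
  split_ifs <;> first | rfl | omega

lemma succ_left (N s : ℕ) (k : ℤ) :
    ordMultinomial (N + 1) s k = ∑ i ∈ range (s + 1), ordMultinomial N s (k - i) := by
  obtain hk | hk := lt_or_ge k 0
  · rw [of_neg hk, eq_comm]
    exact sum_eq_zero fun i _ => of_neg (by omega)
  lift k to ℕ using hk
  simp only [ordMultinomial, pow_succ, mul_sum, finsetSum_coeff, coeff_mul_X_pow', Nat.cast_nonneg,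
    if_true, Int.toNat_natCast]
  refine sum_congr rfl fun i _ => ?_
  by_cases hi : i ≤ k
  · rw [if_pos hi, if_pos (by omega)]
    congr 1
    omega
  · rw [if_neg hi, if_neg (by omega)]

lemma succ_left_add_one_add (N s : ℕ) (k : ℤ) :
    ordMultinomial (N + 1) s (k + 1) + ordMultinomial N s (k - s) =
      ordMultinomial (N + 1) s k + ordMultinomial N s (k + 1) := by
  set f : ℕ → ℕ := fun i => ordMultinomial N s (k + 1 - i) with hf
  have hshift (i : ℕ) : f (i + 1) = ordMultinomial N s (k - i) := by
    simp only [hf]; push_cast; ring_nf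
  calc _ = ∑ i ∈ range (s + 2), f i := by
        rw [sum_range_succ, succ_left, ← hshift]
    _ = _ := by
        rw [sum_range_succ', succ_left, sum_congr rfl fun i _ => hshift i]
        simp [hf]

lemma symm (N s : ℕ) (k : ℤ) : ordMultinomial N s (s * N - k) = ordMultinomial N s k := by
  induction N generalizing k with
  | zero => simp only [zero_left]; split_ifs <;> omega
  | succ N ih =>
    rw [Nat.cast_succ, mul_add_one, succ_left, succ_left, ← sum_range_reflect]
    refine sum_congr rfl fun i hi => ?_
    have hi : i ≤ s := Nat.lt_succ_iff.mp (mem_range.mp hi)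
    rw [← ih]
    congr 1
    push_cast
    omega

lemma pos {k : ℤ} (h0 : 0 ≤ k) (hk : k ≤ s * N) : 0 < ordMultinomial N s k := by
  induction N generalizing k with
  | zero => simp only [zero_left]; split_ifs <;> omega
  | succ N ih =>
    rw [Nat.cast_succ, mul_add_one] at hk
    have hsN : (0 : ℤ) ≤ s * N := by positivity
    rw [succ_left]
    refine sum_pos' (fun i _ => Nat.zero_le _) ⟨(k - s * N).toNat, ?_, ih (by omega) (by omega)⟩
    exact mem_range.mpr (by omega)

lemma lt_of_add_lt (hmono : StrictMonoOn (ordMultinomial N s) (Set.Icc 0 (s * N / 2)))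
    {a b : ℤ} (hab : a < b) (hsum : a + b < s * N) (hb : 0 ≤ b) (hbN : b ≤ s * N) :
    ordMultinomial N s a < ordMultinomial N s b := by
  obtain ha | ha := lt_or_ge a 0
  · rw [of_neg ha]
    exact pos hb hbN
  obtain hmid | hmid := le_or_gt (2 * b) (s * N)
  · exact hmono ⟨ha, by omega⟩ ⟨by omega, by omega⟩ hab
  · rw [← symm N s b]
    exact hmono ⟨ha, by omega⟩ ⟨by omega, by omega⟩ (by omega)

theorem strictMonoOn (hN : 2 ≤ N) :
    StrictMonoOn (ordMultinomial N s) (Set.Icc 0 (s * N / 2)) := by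
  induction N, hN using Nat.le_induction with
  | base =>
    refine strictMonoOn_of_lt_add_one Set.ordConnected_Icc fun k _ _ hk1 => ?_
    have hstep : ordMultinomial 2 s (k + 1) + ordMultinomial 1 s (k - s) =
        ordMultinomial 2 s k + ordMultinomial 1 s (k + 1) := succ_left_add_one_add 1 s k
    simp only [Set.mem_Icc, Nat.cast_ofNat] at hk1
    have hvanish : ordMultinomial 1 s (k - s) = 0 := of_neg (by omega)
    have hpos : 0 < ordMultinomial 1 s (k + 1) :=
      pos (by omega) (by rw [Nat.cast_one, mul_one]; omega)
    omega
  | succ N hN ih =>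
    refine strictMonoOn_of_lt_add_one Set.ordConnected_Icc fun k _ hk hk1 => ?_
    have hstep := succ_left_add_one_add N s k
    have hsN : (s : ℤ) ≤ s * N := le_mul_of_one_le_right (by positivity) (by norm_cast; omega)
    simp only [Set.mem_Icc, Nat.cast_succ, mul_add_one] at hk hk1
    have hlt : ordMultinomial N s (k - s) < ordMultinomial N s (k + 1) :=
      lt_of_add_lt ih (by omega) (by omega) (by omega) (by omega)
    omega

end ordMultinomial

theorem stmt_7_general (N s : ℕ) (hN : 2 ≤ N) (k : ℕ) (hk : k < s * N / 2) :
    ordMultinomial N s k < ordMultinomial N s (k + 1) :=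
  ordMultinomial.strictMonoOn hN ⟨by positivity, by omega⟩ ⟨by positivity, by omega⟩ (by omega)

theorem stmt_7 (N s : ℕ) (hN : 2 ≤ N) (hs : 1 ≤ s) (k : ℕ) (hk : k < s * N / 2) :
    ordMultinomial N s k < ordMultinomial N s (k + 1) :=
  stmt_7_general N s hN k hk
end

section
/- The ordinary multinomials are strongly unimodal: for N ≥ 2 and s ≥ 1, ⟨N,0⟩_s < ⟨N,1⟩_s < ⋯ < ⟨N,⌊sN/2⌋⟩_s = ⟨N,⌈sN/2⌉⟩_s > ⋯ > ⟨N,sN⟩_s. -/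
open Polynomial Finset

lemma ordMultinomial_of_neg {N s : ℕ} {k : ℤ} (hk : k < 0) : ordMultinomial N s k = 0 := by
  simp [ordMultinomial, not_le.2 hk]

lemma ordMultinomial_natCast (N s n : ℕ) :
    ordMultinomial N s n = ((∑ i ∈ range (s + 1), (X : ℕ[X]) ^ i) ^ N).coeff n := by
  simp [ordMultinomial]

lemma ordMultinomial_zero_left (s : ℕ) (k : ℤ) :
    ordMultinomial 0 s k = if k = 0 then 1 else 0 := by
  rcases lt_or_ge k 0 with hk | hk
  · simp [ordMultinomial_of_neg hk, hk.ne]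
  · lift k to ℕ using hk
    simp [ordMultinomial_natCast, coeff_one]

lemma ordMultinomial_succ (N s : ℕ) (k : ℤ) :
    ordMultinomial (N + 1) s k = ∑ i ∈ range (s + 1), ordMultinomial N s (k - i) := by
  rcases lt_or_ge k 0 with hk | hk
  · rw [ordMultinomial_of_neg hk]
    exact (sum_eq_zero fun i _ => ordMultinomial_of_neg (by omega)).symm
  lift k to ℕ using hk
  rw [ordMultinomial_natCast, pow_succ, mul_sum, finsetSum_coeff]
  refine sum_congr rfl fun i _ => ?_
  rw [coeff_mul_X_pow']
  split_ifs with h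
  · rw [← ordMultinomial_natCast]
    congr 1
    omega
  · rw [ordMultinomial_of_neg (by omega)]

lemma ordMultinomial_mul_sub (N s : ℕ) (k : ℤ) :
    ordMultinomial N s (s * N - k) = ordMultinomial N s k := by
  induction N generalizing k with
  | zero => simp [ordMultinomial_zero_left, neg_eq_zero]
  | succ N ih =>
    rw [ordMultinomial_succ, ordMultinomial_succ, ← sum_range_reflect]
    refine sum_congr rfl fun i hi => ?_
    rw [← ih]
    congr 1
    have : i ≤ s := Nat.lt_succ_iff.1 (mem_range.1 hi)
    push_cast [Nat.add_sub_cancel, this]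
    ring

lemma ordMultinomial_pos {N s : ℕ} {k : ℤ} (h₀ : 0 ≤ k) (h₁ : k ≤ s * N) :
    0 < ordMultinomial N s k := by
  induction N generalizing k with
  | zero => simp [ordMultinomial_zero_left, show k = 0 by simpa using h₁.antisymm h₀]
  | succ N ih =>
    rw [ordMultinomial_succ]
    have hi : min k.toNat s ∈ range (s + 1) := mem_range.2 (by omega)
    refine lt_of_lt_of_le (ih (by omega) ?_)
      (single_le_sum (f := fun i : ℕ => ordMultinomial N s (k - i)) (fun _ _ => Nat.zero_le _) hi)
    have : (0 : ℤ) ≤ s * N := by positivity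
    rw [Nat.cast_succ, mul_add_one] at h₁
    omega

lemma ordMultinomial_succ_add_one (N s : ℕ) (k : ℤ) :
    ordMultinomial (N + 1) s (k + 1) + ordMultinomial N s (k - s) =
      ordMultinomial (N + 1) s k + ordMultinomial N s (k + 1) := by
  rw [ordMultinomial_succ, ordMultinomial_succ, sum_range_succ', sum_range_succ]
  simp only [Nat.cast_add, Nat.cast_one, add_sub_add_right_eq_sub, Nat.cast_zero, sub_zero]
  ring

lemma ordMultinomial_sub_lt_add_one {N s : ℕ} (hN : 1 ≤ N)
    (hmono : 2 ≤ N → StrictMonoOn (ordMultinomial N s) (Set.Icc 0 (s * N / 2)))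
    {k : ℤ} (hk : 0 ≤ k) (hkN : 2 * (k + 1) ≤ s * N + s) :
    ordMultinomial N s (k - s) < ordMultinomial N s (k + 1) := by
  have hsN : (s : ℤ) ≤ s * N := le_mul_of_one_le_right (by positivity) (by exact_mod_cast hN)
  rcases lt_or_ge (k - s) 0 with hneg | hnonneg
  · rw [ordMultinomial_of_neg hneg]
    exact ordMultinomial_pos (by omega) (by omega)
  have hN₂ : 2 ≤ N := by
    by_contra! h
    obtain rfl : N = 1 := by omega
    simp only [Nat.cast_one, mul_one] at hkN
    omega
  rcases le_or_gt (2 * (k + 1)) (s * N) with hle | hgt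
  · exact hmono hN₂ ⟨hnonneg, by omega⟩ ⟨by omega, by omega⟩ (by omega)
  · rw [← ordMultinomial_mul_sub N s (k + 1)]
    exact hmono hN₂ ⟨hnonneg, by omega⟩ ⟨by omega, by omega⟩ (by omega)

lemma ordMultinomial_strictMonoOn {N : ℕ} (s : ℕ) (hN : 2 ≤ N) :
    StrictMonoOn (ordMultinomial N s) (Set.Icc 0 (s * N / 2)) := by
  induction N with
  | zero => omega
  | succ N ih =>
    refine strictMonoOn_of_lt_add_one Set.ordConnected_Icc fun k _ hk hk₁ => ?_
    have hcentre := hk₁.2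
    rw [Nat.cast_succ, mul_add_one] at hcentre
    have hlt := ordMultinomial_sub_lt_add_one (by omega) ih hk.1 (by omega)
    have := ordMultinomial_succ_add_one N s k
    omega

theorem stmt_9_general (N s : ℕ) (hN : 2 ≤ N) :
    (∀ k : ℕ, k < s * N / 2 → ordMultinomial N s k < ordMultinomial N s (k + 1)) ∧
      ordMultinomial N s (s * N / 2) = ordMultinomial N s ((s * N + 1) / 2) ∧
      ∀ k : ℕ, (s * N + 1) / 2 ≤ k → k < s * N →
        ordMultinomial N s (k + 1) < ordMultinomial N s k := by
  have hmono := ordMultinomial_strictMonoOn s hN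
  refine ⟨fun k hk => ?_, ?_, fun k hk₁ hk₂ => ?_⟩
  · exact hmono ⟨by omega, by omega⟩ ⟨by omega, by omega⟩ (by omega)
  · rw [← ordMultinomial_mul_sub]
    congr 1
    omega
  · rw [← ordMultinomial_mul_sub N s k, ← ordMultinomial_mul_sub N s (k + 1)]
    exact hmono ⟨by omega, by omega⟩ ⟨by omega, by omega⟩ (by omega)

theorem stmt_9 (N s : ℕ) (hN : 2 ≤ N) (hs : 1 ≤ s) :
    (∀ k : ℕ, k < s * N / 2 → ordMultinomial N s k < ordMultinomial N s (k + 1)) ∧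
      ordMultinomial N s (s * N / 2) = ordMultinomial N s ((s * N + 1) / 2) ∧
      ∀ k : ℕ, (s * N + 1) / 2 ≤ k → k < s * N →
        ordMultinomial N s (k + 1) < ordMultinomial N s k :=
  stmt_9_general N s hN
end

section
/- If 2 ≤ s and s < (N+1)/2 + 2/N (as rationals), then ⟨N,k⟩_s > k for all 0 ≤ k ≤ sN−2, while ⟨N, sN−1⟩_s ≤ sN−1. Hence k = sN−1 is the smallest k with ⟨N,k⟩_s ≤ k. -/
open Polynomial Finset

namespace OrdAux

noncomputable def P (s : ℕ) : Polynomial ℕ := ∑ i ∈ Finset.range (s+1), Polynomial.X ^ i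

noncomputable def c (s N k : ℕ) : ℕ := ((P s) ^ N).coeff k

lemma coeff_P (s i : ℕ) : (P s).coeff i = if i ≤ s then 1 else 0 := by
  simp only [P, finset_sum_coeff, coeff_X_pow]
  rw [Finset.sum_ite_eq (Finset.range (s+1)) i (fun _ => (1:ℕ))]
  simp [Nat.lt_succ_iff]

lemma natDegree_P_le (s : ℕ) : (P s).natDegree ≤ s := by
  rw [Polynomial.natDegree_le_iff_coeff_eq_zero]
  intro m hm
  rw [coeff_P, if_neg (by omega)]

lemma reflect_P (s : ℕ) : (P s).reflect s = P s := by
  ext i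
  rw [coeff_reflect]
  rcases le_or_gt i s with h | h
  · rw [revAt_le h, coeff_P, coeff_P, if_pos h, if_pos (by omega)]
  · rw [revAt_eq_self_of_lt h]

lemma reflect_pow (s : ℕ) : ∀ N, 1 ≤ N → ((P s) ^ N).reflect (s * N) = (P s) ^ N := by
  intro N hN
  induction N, hN using Nat.le_induction with
  | base => simpa using reflect_P s
  | succ N hN ih =>
      have h1 : ((P s) ^ N).natDegree ≤ s * N := by
        calc ((P s) ^ N).natDegree ≤ N * (P s).natDegree := Polynomial.natDegree_pow_le
          _ ≤ N * s := Nat.mul_le_mul_left N (natDegree_P_le s)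
          _ = s * N := Nat.mul_comm N s
      calc ((P s) ^ (N+1)).reflect (s * (N+1))
          = ((P s) ^ N * P s).reflect (s * N + s) := by rw [pow_succ, Nat.mul_add, Nat.mul_one]
        _ = ((P s) ^ N).reflect (s * N) * (P s).reflect s :=
            Polynomial.reflect_mul _ _ h1 (natDegree_P_le s)
        _ = (P s) ^ (N+1) := by rw [ih, reflect_P, pow_succ]

lemma c_symm (s N i : ℕ) (hN : 1 ≤ N) (hi : i ≤ s * N) : c s N i = c s N (s * N - i) := by
  unfold c
  conv_lhs => rw [← reflect_pow s N hN]
  rw [coeff_reflect, revAt_le hi]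

lemma rec_ite (s N k : ℕ) :
    c s (N+1) k = ∑ a ∈ range (k+1), (if a ≤ s then 1 else 0) * c s N (k-a) := by
  unfold c
  rw [pow_succ']
  rw [coeff_mul, Finset.Nat.sum_antidiagonal_eq_sum_range_succ_mk]
  simp only [coeff_P]

lemma rec_le (s N k : ℕ) (h : k ≤ s) :
    c s (N+1) k = ∑ a ∈ range (k+1), c s N (k-a) := by
  rw [rec_ite]
  refine Finset.sum_congr rfl ?_
  intro a ha
  rw [Finset.mem_range] at ha
  rw [if_pos (by omega), one_mul]

lemma rec_ge (s N k : ℕ) (h : s ≤ k) :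
    c s (N+1) k = ∑ a ∈ range (s+1), c s N (k-a) := by
  rw [rec_ite]
  rw [← Finset.sum_subset (Finset.range_subset_range.mpr (by omega : s + 1 ≤ k + 1))
    (fun x _ hx => by
      rw [Finset.mem_range] at hx
      rw [if_neg (by omega), zero_mul])]
  refine Finset.sum_congr rfl ?_
  intro a ha
  rw [Finset.mem_range] at ha
  rw [if_pos (by omega), one_mul]

lemma c_zero (s : ℕ) : ∀ N, c s N 0 = 1 := by
  intro N
  induction N with
  | zero => simp [c]
  | succ N ih => rw [rec_le s N 0 (by omega)]; simpa using ih

lemma c_one (s : ℕ) (hs : 1 ≤ s) : ∀ N, c s N 1 = N := by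
  intro N
  induction N with
  | zero => simp [c, Polynomial.coeff_one]
  | succ N ih =>
      rw [rec_le s N 1 hs, Finset.sum_range_succ, Finset.sum_range_one]
      simp [ih, c_zero]

lemma c_two (s : ℕ) (hs : 2 ≤ s) : ∀ N, c s N 2 = Nat.choose (N+1) 2 := by
  intro N
  induction N with
  | zero => simp [c, Polynomial.coeff_one]
  | succ N ih =>
      rw [rec_le s N 2 hs, Finset.sum_range_succ, Finset.sum_range_succ,
        Finset.sum_range_one]
      have : Nat.choose (N+2) 2 = Nat.choose (N+1) 1 + Nat.choose (N+1) 2 :=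
        Nat.choose_succ_succ (N+1) 1
      simp [ih, c_zero, c_one s (by omega), this, Nat.choose_one_right]
      omega

lemma c_le_succ (s N k : ℕ) : c s N k ≤ c s (N+1) k := by
  rw [rec_ite]
  have h0 : (0:ℕ) ∈ range (k+1) := by simp
  calc c s N k = (if (0:ℕ) ≤ s then 1 else 0) * c s N (k - 0) := by simp
    _ ≤ ∑ a ∈ range (k+1), (if a ≤ s then 1 else 0) * c s N (k-a) :=
        Finset.single_le_sum (f := fun a => (if a ≤ s then 1 else 0) * c s N (k-a))
          (fun a _ => Nat.zero_le _) h0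

lemma pascal (s N k : ℕ) (h : k + 1 ≤ s) :
    c s (N+1) (k+1) = c s (N+1) k + c s N (k+1) := by
  rw [rec_le s N (k+1) h, rec_le s N k (by omega), Finset.sum_range_succ']
  simp only [Nat.succ_sub_succ, Nat.sub_zero]
  try omega

lemma c_mono (s M : ℕ) : ∀ j, 2 ≤ j → j ≤ s → c s (M+1) 2 ≤ c s (M+1) j := by
  intro j
  induction j with
  | zero => omega
  | succ j ih =>
      intro h2 hj
      rcases Nat.lt_or_ge j 2 with h | h
      · have : j + 1 = 2 := by omega
        rw [this]
      · rw [pascal s M j hj]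
        exact le_trans (ih h (by omega)) (Nat.le_add_right _ _)

lemma B (s : ℕ) (hs : 2 ≤ s) : ∀ N, 2 ≤ N → ∀ k, k ≤ s * (N - 1) → k + 1 ≤ c s N k := by
  intro N hN
  induction N, hN using Nat.le_induction with
  | base =>
      intro k hk
      have hk' : k ≤ s := by simpa using hk
      rw [show (2:ℕ) = 1 + 1 from rfl, rec_le s 1 k hk']
      have : ∀ a ∈ range (k+1), c s 1 (k - a) = 1 := by
        intro a ha
        rw [Finset.mem_range] at ha
        simp only [c, pow_one, coeff_P]
        rw [if_pos (by omega)]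
      rw [Finset.sum_congr rfl this]
      simp
  | succ N hN ih =>
      intro k hk
      have hk' : k ≤ s * N := by rwa [Nat.add_sub_cancel] at hk
      rcases le_or_gt k (s * (N - 1)) with h | h
      · exact le_trans (ih k h) (c_le_succ s N k)
      · -- s*(N-1) < k ≤ s*N
        have hsN : s * (N-1) + s = s * N := by
          have h5 : s * (N - 1 + 1) = s * (N-1) + s := by ring
          rw [← h5]; congr 1; omega
        have hss : s ≤ s * (N-1) := Nat.le_mul_of_pos_right s (by omega : 0 < N - 1)
        have hsk : s ≤ k := by omega
        obtain ⟨j, hjk⟩ : ∃ j, j + k = s * N := ⟨s * N - k, by omega⟩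
        have hjs : j + 1 ≤ s := by omega
        rw [rec_ge s N k hsk]
        rw [Finset.range_eq_Ico, ← Finset.sum_Ico_consecutive _
          (by omega : 0 ≤ s - j) (by omega : s - j ≤ s + 1)]
        have bound1 : (s - j) * (j + 1) ≤ ∑ a ∈ Finset.Ico 0 (s-j), c s N (k - a) := by
          have hterm : ∀ a ∈ Finset.Ico 0 (s-j), j + 1 ≤ c s N (k - a) := by
            intro a ha
            rw [Finset.mem_Ico] at ha
            have h1 : j + a ≤ s * N := by omega
            have h2 : s * N - (j + a) = k - a := by omega
            have h3 : c s N (j + a) = c s N (k - a) := by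
              rw [c_symm s N (j+a) (by omega) h1, h2]
            rw [← h3]
            have h4 : j + a ≤ s * (N - 1) := by omega
            calc j + 1 ≤ (j + a) + 1 := by omega
              _ ≤ c s N (j + a) := ih (j+a) h4
          calc (s - j) * (j + 1) = ∑ _a ∈ Finset.Ico 0 (s-j), (j+1) := by
                rw [Finset.sum_const, smul_eq_mul, Nat.card_Ico, Nat.sub_zero]
            _ ≤ _ := Finset.sum_le_sum hterm
        have bound2 : (j + 1) * (k - s + 1) ≤ ∑ a ∈ Finset.Ico (s-j) (s+1), c s N (k - a) := by
          have hterm : ∀ a ∈ Finset.Ico (s-j) (s+1), k - s + 1 ≤ c s N (k - a) := by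
            intro a ha
            rw [Finset.mem_Ico] at ha
            have h4 : k - a ≤ s * (N - 1) := by omega
            calc k - s + 1 ≤ (k - a) + 1 := by omega
              _ ≤ c s N (k - a) := ih (k - a) h4
          calc (j + 1) * (k - s + 1) = ∑ _a ∈ Finset.Ico (s-j) (s+1), (k - s + 1) := by
                rw [Finset.sum_const, smul_eq_mul, Nat.card_Ico]
                have h6 : s + 1 - (s - j) = j + 1 := by omega
                rw [h6]
            _ ≤ _ := Finset.sum_le_sum hterm
        have harith : k + 1 ≤ (s - j) * (j + 1) + (j + 1) * (k - s + 1) := by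
          obtain ⟨d, hd⟩ : ∃ d, d + j = s := ⟨s - j, by omega⟩
          obtain ⟨m, hm⟩ : ∃ m, m + s = k := ⟨k - s, by omega⟩
          have e1 : s - j = d := by omega
          have e2 : k - s = m := by omega
          have e3 : k = m + d + j := by omega
          have hd1 : 1 ≤ d := by omega
          rw [e1, e2, e3]
          nlinarith [Nat.zero_le (d*j), Nat.zero_le (j*m)]
        omega

end OrdAux


lemma ord_eq (N s k : ℕ) : ordMultinomial N s (k : ℤ) = OrdAux.c s N k := by
  rw [ordMultinomial, if_pos (by positivity : (0:ℤ) ≤ (k:ℤ))]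
  simp [OrdAux.c, OrdAux.P]

theorem stmt_12 (N s : ℕ) (hN : 2 ≤ N) (hs : 2 ≤ s)
    (h : (s : ℚ) < (N + 1) / 2 + 2 / N) :
    (∀ k : ℕ, k ≤ s * N - 2 → k < ordMultinomial N s k) ∧
      ordMultinomial N s (s * N - 1) ≤ s * N - 1 := by
  have h4 : 4 ≤ s * N := le_trans (by norm_num) (Nat.mul_le_mul hs hN)
  have hsN : s * (N - 1) + s = s * N := by
    have h5 : N - 1 + 1 = N := by omega
    calc s * (N - 1) + s = s * (N - 1 + 1) := by ring
      _ = s * N := by rw [h5]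
  -- consequence of the rational hypothesis: 2sN ≤ N(N+1) + 2
  have hq : 2 * (s * N) ≤ N * (N + 1) + 2 := by
    have hN0 : (0 : ℚ) < N := by exact_mod_cast (by omega : 0 < N)
    have h2 : (s : ℚ) * (2 * N) < ((N + 1) / 2 + 2 / N) * (2 * N) :=
      mul_lt_mul_of_pos_right h (by positivity)
    have h3 : (((N:ℚ) + 1) / 2 + 2 / N) * (2 * N) = (N : ℚ) * (N + 1) + 4 := by
      field_simp; ring
    have h5 : ((2 * (s * N) : ℕ) : ℚ) < ((N * (N + 1) + 4 : ℕ) : ℚ) := by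
      push_cast
      nlinarith [h2, h3]
    have h6 : 2 * (s * N) < N * (N + 1) + 4 := by exact_mod_cast h5
    obtain ⟨t, ht⟩ := Nat.even_mul_succ_self N
    omega
  have hch : 2 * Nat.choose (N + 1) 2 = N * (N + 1) := by
    have heven : 2 ∣ (N + 1) * N := by
      rw [mul_comm]
      exact (Nat.even_mul_succ_self N).two_dvd
    rw [Nat.choose_two_right]
    simp only [Nat.add_sub_cancel]
    rw [Nat.mul_div_cancel' heven, mul_comm]
  constructor
  · intro k hk
    have hk2 : k + 2 ≤ s * N := by omega
    rw [ord_eq]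
    rcases le_or_gt k (s * (N - 1)) with hc | hc
    · have := OrdAux.B s hs N hN k hc
      omega
    · obtain ⟨j, hjk⟩ : ∃ j, j + k = s * N := ⟨s * N - k, by omega⟩
      have hj2 : 2 ≤ j := by omega
      have hjle : j ≤ s := by omega
      have hcsymm : OrdAux.c s N k = OrdAux.c s N j := by
        have hkle : k ≤ s * N := by omega
        rw [OrdAux.c_symm s N k (by omega) hkle]
        congr 1
        omega
      obtain ⟨M, hM⟩ : ∃ M, N = M + 1 := ⟨N - 1, by omega⟩
      have hmono : OrdAux.c s N 2 ≤ OrdAux.c s N j := by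
        rw [hM]; exact OrdAux.c_mono s M j hj2 hjle
      have h2v : OrdAux.c s N 2 = Nat.choose (N + 1) 2 := OrdAux.c_two s hs N
      omega
  · have harg : ((s : ℤ) * N - 1) = ((s * N - 1 : ℕ) : ℤ) := by
      rw [Nat.cast_sub (by omega : 1 ≤ s * N)]
      push_cast
      ring
    rw [show ((s : ℤ) * N - 1) = ((s * N - 1 : ℕ) : ℤ) from harg, ord_eq]
    have hsym : OrdAux.c s N 1 = OrdAux.c s N (s * N - 1) :=
      OrdAux.c_symm s N 1 (by omega) (by omega)
    rw [← hsym, OrdAux.c_one s (by omega) N]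
    have h2N : 2 * N ≤ s * N := Nat.mul_le_mul_right N hs
    omega
end

section
/- For N ≥ 2, s ≥ 1 and all 0 ≤ k < ⌊sN/2⌋, the strict inequality ⟨N,k⟩_s > k holds. -/
section OrdMultinomialAux

open Polynomial Finset

noncomputable def P (s : ℕ) : Polynomial ℕ := ∑ i ∈ Finset.range (s + 1), X ^ i

lemma coeff_P (s j : ℕ) : (P s).coeff j = if j ≤ s then 1 else 0 := by
  simp [P, coeff_X_pow, Finset.sum_ite_eq, Nat.lt_succ_iff]

lemma natDegree_P (s : ℕ) : (P s).natDegree = s := by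
  apply le_antisymm
  · apply Polynomial.natDegree_sum_le_of_forall_le
    intro i hi
    simpa [Polynomial.natDegree_X_pow] using Nat.lt_succ_iff.mp (Finset.mem_range.mp hi)
  · apply Polynomial.le_natDegree_of_ne_zero
    simp [coeff_P]

lemma leadingCoeff_P (s : ℕ) : (P s).leadingCoeff = 1 := by
  rw [Polynomial.leadingCoeff, natDegree_P, coeff_P]; simp

lemma reverse_P (s : ℕ) : (P s).reverse = P s := by
  ext n
  rw [Polynomial.coeff_reverse, natDegree_P, coeff_P, coeff_P]
  rcases le_or_gt n s with h | h
  · rw [Polynomial.revAt_le h]; simp [Nat.sub_le, h]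
  · rw [Polynomial.revAt_eq_self_of_lt h]

lemma monic_P (s : ℕ) : (P s).Monic := leadingCoeff_P s

lemma reverse_P_pow (s N : ℕ) : ((P s) ^ N).reverse = (P s) ^ N := by
  induction N with
  | zero => rw [pow_zero, ← Polynomial.C_1, Polynomial.reverse_C]
  | succ n ih =>
    rw [pow_succ, Polynomial.reverse_mul, ih, reverse_P]
    rw [leadingCoeff_P, ((monic_P s).pow n).leadingCoeff]
    simp

lemma symm_P (s N k : ℕ) (hk : k ≤ s * N) :
    ((P s) ^ N).coeff k = ((P s) ^ N).coeff (s * N - k) := by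
  conv_lhs => rw [← reverse_P_pow]
  rw [Polynomial.coeff_reverse, Polynomial.natDegree_pow, natDegree_P,
    Polynomial.revAt_le (Nat.mul_comm s N ▸ hk), Nat.mul_comm N s]

lemma coeff_P_pow_succ (s N k : ℕ) :
    ((P s) ^ (N + 1)).coeff k
      = ∑ i ∈ Finset.range (k + 1), if i ≤ s then ((P s) ^ N).coeff (k - i) else 0 := by
  rw [pow_succ' (P s) N, Polynomial.coeff_mul, Finset.Nat.sum_antidiagonal_eq_sum_range_succ_mk]
  refine Finset.sum_congr rfl fun i _ => ?_
  rw [coeff_P]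
  split <;> simp

lemma single_le (s n k i : ℕ) (h1 : i < k + 1) (h2 : i ≤ s) :
    ((P s)^n).coeff (k - i)
      ≤ ∑ j ∈ Finset.range (k + 1), if j ≤ s then ((P s) ^ n).coeff (k - j) else 0 := by
  simpa [h2] using Finset.single_le_sum
    (f := fun j => if j ≤ s then ((P s)^n).coeff (k-j) else 0)
    (fun j _ => Nat.zero_le _) (Finset.mem_range.mpr h1)

lemma pos_P (s N k : ℕ) (hk : k ≤ s * N) : 1 ≤ ((P s) ^ N).coeff k := by
  induction N generalizing k with
  | zero =>
    have hk0 : k = 0 := by simpa using hk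
    subst hk0; simp
  | succ n ih =>
    have hsn : s * (n + 1) = s * n + s := by ring
    rw [coeff_P_pow_succ]
    rcases le_or_gt k (s * n) with h | h
    · exact (ih k h).trans (single_le s n k 0 (by omega) (by omega))
    · have := (ih (k - (k - s*n)) (by omega)).trans
        (single_le s n k (k - s*n) (by omega) (by omega))
      exact this

lemma base_P (s k : ℕ) (hk : k ≤ s) : k + 1 ≤ ((P s) ^ 2).coeff k := by
  rw [coeff_P_pow_succ]
  have : ∀ i ∈ Finset.range (k + 1),
      (if i ≤ s then ((P s) ^ 1).coeff (k - i) else 0) = 1 := by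
    intro i hi
    have hik : i ≤ k := by simpa [Nat.lt_succ_iff] using hi
    rw [if_pos (hik.trans hk), pow_one, coeff_P, if_pos (by omega)]
  rw [Finset.sum_congr rfl this, Finset.sum_const, Finset.card_range, smul_eq_mul, mul_one]

lemma main_P (s N : ℕ) (hN : 2 ≤ N) (k : ℕ) (hk : 2 * k ≤ s * N) :
    k + 1 ≤ ((P s) ^ N).coeff k := by
  induction N, hN using Nat.le_induction generalizing k with
  | base => exact base_P s k (by omega)
  | succ N hN ih =>
    have hsn : s * (N + 1) = s * N + s := by ring
    have hsN : 2 * s ≤ s * N := by nlinarith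
    rw [coeff_P_pow_succ]
    rcases le_or_gt (2 * k) (s * N) with h | h
    · exact (ih k h).trans (single_le s N k 0 (by omega) (by omega))
    · have hks : s < k := by omega
      have hkle : k ≤ s * N := by omega
      have hA : s * N - k + 1 ≤ ((P s) ^ N).coeff (s * N - k) := ih _ (by omega)
      have hB : s ≤ ∑ i ∈ Finset.range s, ((P s) ^ N).coeff (k - (i + 1)) := by
        calc s = ∑ _i ∈ Finset.range s, 1 := by simp
          _ ≤ _ := Finset.sum_le_sum fun i _ => pos_P s N _ (by omega)
      calc k + 1 ≤ (s * N - k + 1) + s := by omega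
        _ ≤ ((P s) ^ N).coeff (s * N - k)
              + ∑ i ∈ Finset.range s, ((P s) ^ N).coeff (k - (i + 1)) := add_le_add hA hB
        _ = (∑ i ∈ Finset.range s, ((P s) ^ N).coeff (k - (i + 1)))
              + ((P s) ^ N).coeff (k - 0) := by
            rw [← symm_P s N k hkle, Nat.sub_zero, add_comm]
        _ = ∑ i ∈ Finset.range (s + 1), ((P s) ^ N).coeff (k - i) :=
            (Finset.sum_range_succ' (fun i => ((P s) ^ N).coeff (k - i)) s).symm
        _ = ∑ i ∈ Finset.range (s + 1),
              if i ≤ s then ((P s) ^ N).coeff (k - i) else 0 := by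
            refine Finset.sum_congr rfl fun i hi => ?_
            rw [if_pos (by simpa [Nat.lt_succ_iff] using hi)]
        _ ≤ ∑ i ∈ Finset.range (k + 1),
              if i ≤ s then ((P s) ^ N).coeff (k - i) else 0 :=
            Finset.sum_le_sum_of_subset (Finset.range_subset_range.mpr (by omega))

end OrdMultinomialAux

theorem stmt_13 (N s : ℕ) (hN : 2 ≤ N) (hs : 1 ≤ s) (k : ℕ) (hk : k < s * N / 2) :
    k < ordMultinomial N s k := by
  have h2 : 2 * k ≤ s * N := by
    have := Nat.div_mul_le_self (s * N) 2
    omega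
  have hmain := main_P s N hN k h2
  rw [ordMultinomial, if_pos (by positivity), Int.toNat_natCast]
  calc k < k + 1 := Nat.lt_succ_self k
    _ ≤ _ := hmain
end

section
/- For N = 3 and s ≥ 1, the smallest k such that ⟨3,k⟩_s − ⟨3,k−(s+1)⟩_s ≤ k is k = 2s. -/
open Polynomial Finset

noncomputable def q (s : ℕ) : Polynomial ℤ := ∑ i ∈ Finset.range (s + 1), (X : Polynomial ℤ) ^ i

lemma coeff_q (s n : ℕ) : (q s).coeff n = if n ≤ s then 1 else 0 := by
  simp [q, Polynomial.finset_sum_coeff, Polynomial.coeff_X_pow, Finset.sum_ite_eq,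
    Nat.lt_succ_iff, eq_comm]

lemma gauss (m : ℕ) : (∑ k ∈ Finset.range m, ((k : ℤ) + 1)) * 2 = m * (m + 1) := by
  induction m with
  | zero => simp
  | succ n ih => rw [Finset.sum_range_succ]; push_cast; linear_combination ih

lemma c2_lo (s n : ℕ) (h : n ≤ s) : ((q s) ^ 2).coeff n = (n : ℤ) + 1 := by
  rw [sq, Polynomial.coeff_mul, Finset.Nat.sum_antidiagonal_eq_sum_range_succ_mk]
  have h1 : ∀ k ∈ Finset.range (n + 1),
      (q s).coeff k * (q s).coeff (n - k) = (1 : ℤ) := by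
    intro k hk
    simp only [Finset.mem_range, Nat.lt_succ_iff] at hk
    rw [coeff_q, coeff_q, if_pos (by omega), if_pos (by omega)]
    norm_num
  rw [Finset.sum_congr rfl h1, Finset.sum_const, Finset.card_range]
  push_cast; ring

lemma c2_hi (s n : ℕ) (h1 : s < n) (h2 : n ≤ 2 * s) :
    ((q s) ^ 2).coeff n = 2 * (s : ℤ) + 1 - n := by
  rw [sq, Polynomial.coeff_mul, Finset.Nat.sum_antidiagonal_eq_sum_range_succ_mk]
  have h0 : ∀ k ∈ Finset.range (n + 1),
      (q s).coeff k * (q s).coeff (n - k) = if n - s ≤ k ∧ k ≤ s then (1:ℤ) else 0 := by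
    intro k hk
    simp only [Finset.mem_range, Nat.lt_succ_iff] at hk
    rw [coeff_q, coeff_q]
    by_cases h3 : k ≤ s <;> by_cases h4 : n - k ≤ s <;>
      simp [h3, h4] <;> omega
  rw [Finset.sum_congr rfl h0, Finset.sum_boole]
  have h5 : (Finset.range (n+1)).filter (fun k => n - s ≤ k ∧ k ≤ s) = Finset.Icc (n - s) s := by
    ext k; simp [Nat.lt_succ_iff]; omega
  rw [h5, Nat.card_Icc]
  omega

lemma c3_lo (s n : ℕ) (h : n ≤ s) :
    ((q s) ^ 3).coeff n * 2 = ((n : ℤ) + 1) * ((n : ℤ) + 2) := by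
  have e : (q s) ^ 3 = q s * (q s) ^ 2 := by ring
  rw [e, Polynomial.coeff_mul, Finset.Nat.sum_antidiagonal_eq_sum_range_succ_mk]
  have h1 : ∀ k ∈ Finset.range (n + 1),
      (q s).coeff k * ((q s) ^ 2).coeff (n - k) = ((n - k : ℕ) : ℤ) + 1 := by
    intro k hk
    simp only [Finset.mem_range, Nat.lt_succ_iff] at hk
    rw [coeff_q, if_pos (by omega), c2_lo s _ (by omega), one_mul]
  rw [Finset.sum_congr rfl h1]
  have h2 : (∑ k ∈ Finset.range (n + 1), (((n - k : ℕ) : ℤ) + 1))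
      = ∑ k ∈ Finset.range (n + 1), ((k : ℤ) + 1) := by
    exact Finset.sum_range_reflect (fun k => ((k : ℤ) + 1)) (n + 1)
  rw [h2, gauss]
  push_cast; ring

lemma sum_asc (m : ℕ) (a : ℤ) : (∑ k ∈ Finset.range m, (a + k)) * 2 = m * (2 * a + m - 1) := by
  induction m with
  | zero => simp
  | succ n ih => rw [Finset.sum_range_succ]; push_cast; linear_combination ih

lemma sum_desc (m : ℕ) (a : ℤ) : (∑ k ∈ Finset.range m, (a - k)) * 2 = m * (2 * a - m + 1) := by
  induction m with
  | zero => simp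
  | succ n ih => rw [Finset.sum_range_succ]; push_cast; linear_combination ih

lemma c3_hi (s j : ℕ) (h1 : 1 ≤ j) (h2 : j ≤ s) :
    ((q s) ^ 3).coeff (s + j) * 2
      = ((s : ℤ) + 1) * ((s : ℤ) + 2) + 2 * j * ((s : ℤ) - j) := by
  have e : (q s) ^ 3 = q s * (q s) ^ 2 := by ring
  rw [e, Polynomial.coeff_mul, Finset.Nat.sum_antidiagonal_eq_sum_range_succ_mk]
  have hsub : Finset.range (s + 1) ⊆ Finset.range (s + j + 1) := by
    apply Finset.range_subset_range.2; omega
  rw [← Finset.sum_subset hsub (by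
    intro k hk hk2
    simp only [Finset.mem_range, Nat.lt_succ_iff] at hk hk2
    rw [coeff_q, if_neg (by omega), zero_mul])]
  have h3 : ∀ k ∈ Finset.range (s + 1),
      (q s).coeff k * ((q s) ^ 2).coeff (s + j - k)
        = if k < j then ((s : ℤ) + 1 - j + k) else ((s : ℤ) + j - k + 1) := by
    intro k hk
    simp only [Finset.mem_range, Nat.lt_succ_iff] at hk
    rw [coeff_q, if_pos (by omega), one_mul]
    by_cases hkj : k < j
    · rw [if_pos hkj, c2_hi s _ (by omega) (by omega)]
      have : ((s + j - k : ℕ) : ℤ) = (s : ℤ) + j - k := by omega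
      rw [this]; ring
    · rw [if_neg hkj, c2_lo s _ (by omega)]
      have : ((s + j - k : ℕ) : ℤ) = (s : ℤ) + j - k := by omega
      rw [this]
  rw [Finset.sum_congr rfl h3, Finset.sum_ite]
  have hf1 : (Finset.range (s+1)).filter (fun k => k < j) = Finset.range j := by
    ext k; simp; omega
  have hf2 : (Finset.range (s+1)).filter (fun k => ¬ k < j) = Finset.Ico j (s+1) := by
    ext k; simp; omega
  rw [hf1, hf2]
  have hA := sum_asc j ((s : ℤ) + 1 - j)
  have hB : (∑ k ∈ Finset.Ico j (s+1), ((s : ℤ) + j - k + 1)) * 2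
      = ((s : ℤ) + 1 - j) * (2 * ((s:ℤ) + 1) - ((s:ℤ) + 1 - j) + 1) := by
    rw [Finset.sum_Ico_eq_sum_range]
    have hs3 : ∀ i ∈ Finset.range (s + 1 - j),
        ((s : ℤ) + j - ((j + i : ℕ) : ℤ) + 1) = ((s:ℤ) + 1 - i) := by
      intro i hi; push_cast; ring
    rw [Finset.sum_congr rfl hs3, sum_desc]
    have hc : ((s + 1 - j : ℕ) : ℤ) = (s:ℤ) + 1 - j := by omega
    rw [hc]
  linarith [hA, hB, add_mul (∑ k ∈ Finset.range j, ((s : ℤ) + 1 - j + k))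
    (∑ k ∈ Finset.Ico j (s+1), ((s : ℤ) + j - k + 1)) 2]


lemma ord_eq_s17 (s : ℕ) (k : ℤ) (hk : 0 ≤ k) :
    (ordMultinomial 3 s k : ℤ) = ((q s) ^ 3).coeff k.toNat := by
  rw [ordMultinomial, if_pos hk]
  have : q s = ((∑ i ∈ Finset.range (s + 1), (Polynomial.X : Polynomial ℕ) ^ i)).map
      (Int.ofNatHom) := by
    simp [q, Polynomial.map_sum, Polynomial.map_pow]
  rw [this, ← Polynomial.map_pow, Polynomial.coeff_map]
  simp

lemma ord_neg (s : ℕ) (k : ℤ) (hk : k < 0) : ordMultinomial 3 s k = 0 := by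
  rw [ordMultinomial, if_neg (by omega)]

theorem stmt_17 (s : ℕ) (hs : 1 ≤ s) :
    (∀ k : ℤ, 0 ≤ k → k < 2 * s →
        k < (ordMultinomial 3 s k : ℤ) - ordMultinomial 3 s (k - (s + 1))) ∧
      (ordMultinomial 3 s (2 * s) : ℤ) - ordMultinomial 3 s (2 * (s : ℤ) - (s + 1)) ≤ 2 * s := by
  constructor
  · intro k hk0 hk2
    by_cases hks : k ≤ s
    · rw [ord_eq_s17 s k hk0, ord_neg s (k - (s+1)) (by omega)]
      have hn : k.toNat ≤ s := by omega
      have := c3_lo s k.toNat hn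
      have hkn : ((k.toNat : ℕ) : ℤ) = k := by omega
      rw [hkn] at this
      push_cast
      nlinarith
    · -- s < k < 2s, so k = s + j with 1 ≤ j ≤ s - 1
      have hj1 : 1 ≤ k - s := by omega
      have hkn : k.toNat = s + (k - s).toNat := by omega
      have hj2 : (k - s).toNat ≤ s := by omega
      rw [ord_eq_s17 s k hk0, ord_eq_s17 s _ (by omega), hkn]
      have hhi := c3_hi s (k - s).toNat (by omega) hj2
      have hlo := c3_lo s (k - (s+1)).toNat (by omega)
      have e1 : (((k - s).toNat : ℕ) : ℤ) = k - s := by omega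
      have e2 : (((k - (s+1)).toNat : ℕ) : ℤ) = k - s - 1 := by omega
      rw [e1] at hhi
      rw [e2] at hlo
      have hj3 : k - s ≤ (s : ℤ) - 1 := by omega
      nlinarith [mul_nonneg (show (0:ℤ) ≤ (s:ℤ) - (k - s) - 1 by omega)
        (show (0:ℤ) ≤ (s:ℤ) + 3 * (k - s) by omega)]
  · have h1 : (2 * (s:ℤ) - (s + 1)) = ((s:ℤ) - 1) := by ring
    rw [h1, ord_eq_s17 s (2 * s) (by positivity), ord_eq_s17 s ((s:ℤ) - 1) (by omega)]
    have e1 : (2 * (s:ℤ)).toNat = s + s := by omega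
    have e2 : ((s:ℤ) - 1).toNat = s - 1 := by omega
    rw [e1, e2]
    have hhi := c3_hi s s (by omega) (le_refl s)
    have hlo := c3_lo s (s - 1) (by omega)
    have e3 : (((s - 1 : ℕ)) : ℤ) = (s : ℤ) - 1 := by omega
    rw [e3] at hlo
    nlinarith
end

section
/- For N = 3 and s < k ≤ 2s, writing k = s+t with 1 ≤ t ≤ s, the closed form ⟨3,k⟩_s − ⟨3,k−(s+1)⟩_s = (s−t+1)(s+2t+1) + t(t−3)/2 − s(s+1)/2 holds. -/
open Polynomial Finset

lemma coeffP (s n : ℕ) :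
    ((∑ i ∈ range (s+1), (X : Polynomial ℕ) ^ i)).coeff n = if n ≤ s then 1 else 0 := by
  rw [finset_sum_coeff]
  simp only [coeff_X_pow]
  rw [Finset.sum_ite_eq (range (s+1)) n (fun _ => 1)]
  simp [Nat.lt_succ_iff]

lemma coeff2 (s n : ℕ) :
    (((∑ i ∈ range (s+1), (X : Polynomial ℕ) ^ i))^2).coeff n = min n s + 1 - (n - s) := by
  rw [sq, coeff_mul, Finset.Nat.sum_antidiagonal_eq_sum_range_succ_mk]
  simp only [coeffP]
  have : ∀ a ∈ range (n+1),
      (if a ≤ s then (1:ℕ) else 0) * (if n - a ≤ s then 1 else 0)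
        = if a ∈ Finset.Ico (n - s) (min n s + 1) then 1 else 0 := by
    intro a ha
    simp only [Finset.mem_Ico, Finset.mem_range] at *
    split_ifs <;> simp_all <;> omega
  rw [Finset.sum_congr rfl this, Finset.sum_ite_mem, Finset.inter_comm]
  have : Finset.Ico (n - s) (min n s + 1) ∩ range (n+1) = Finset.Ico (n - s) (min n s + 1) := by
    apply Finset.inter_eq_left.mpr
    intro x hx
    simp only [Finset.mem_Ico, Finset.mem_range] at *
    omega
  rw [this]
  simp [Nat.card_Ico]

lemma coeff3 (s K : ℕ) :
    (((∑ i ∈ range (s+1), (X : Polynomial ℕ) ^ i))^3).coeff K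
      = ∑ a ∈ range (K+1), (if a ≤ s then (1:ℕ) else 0) * (min (K-a) s + 1 - (K-a-s)) := by
  have h : ((∑ i ∈ range (s+1), (X : Polynomial ℕ) ^ i))^3
      = ((∑ i ∈ range (s+1), (X : Polynomial ℕ) ^ i))
        * ((∑ i ∈ range (s+1), (X : Polynomial ℕ) ^ i))^2 := by ring
  rw [h, coeff_mul, Finset.Nat.sum_antidiagonal_eq_sum_range_succ_mk]
  simp only [coeffP, coeff2]

lemma sumZ (c : ℤ) (n : ℕ) :
    2 * ∑ a ∈ range n, (c + a) = 2 * c * n + n * (n - 1) := by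
  induction n with
  | zero => simp
  | succ n ih =>
    rw [Finset.sum_range_succ]
    push_cast
    push_cast at ih
    linear_combination ih

lemma claim_low (s K : ℕ) (h : K ≤ s) :
    2 * ((((∑ i ∈ range (s+1), (X : Polynomial ℕ) ^ i))^3).coeff K : ℤ)
      = (K+1) * (K+2) := by
  rw [coeff3]
  have e1 : ∑ a ∈ range (K+1), (if a ≤ s then (1:ℕ) else 0) * (min (K-a) s + 1 - (K-a-s))
      = ∑ a ∈ range (K+1), (1 + a) := by
    rw [← Finset.sum_range_reflect (fun a => 1 + a) (K+1)]
    apply Finset.sum_congr rfl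
    intro a ha
    simp only [Finset.mem_range] at ha
    rw [if_pos (by omega)]
    have hm : min (K - a) s = K - a := by omega
    rw [hm]
    omega
  rw [e1]
  push_cast
  rw [sumZ]
  push_cast
  ring

lemma claim_high (s t : ℕ) (ht : 1 ≤ t) (hts : t ≤ s) :
    2 * ((((∑ i ∈ range (s+1), (X : Polynomial ℕ) ^ i))^3).coeff (s+t) : ℤ)
      = (s+t+2) * (s+t+1) - 3 * (t * (t+1)) := by
  obtain ⟨d, rfl⟩ : ∃ d, s = t + d := ⟨s - t, by omega⟩
  rw [coeff3]
  have e1 : ∑ a ∈ range ((t+d)+t+1),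
        (if a ≤ t+d then (1:ℕ) else 0) * (min ((t+d)+t-a) (t+d) + 1 - ((t+d)+t-a-(t+d)))
      = ∑ a ∈ range (t+(d+1)),
        (if a ≤ t+d then (1:ℕ) else 0) * (min ((t+d)+t-a) (t+d) + 1 - ((t+d)+t-a-(t+d))) := by
    rw [eq_comm]
    apply Finset.sum_subset
    · apply Finset.range_subset_range.2; omega
    · intro a ha hna
      simp only [Finset.mem_range] at ha hna
      rw [if_neg (by omega), zero_mul]
  rw [e1]
  have e2 : ∑ a ∈ range (t+(d+1)),
        (if a ≤ t+d then (1:ℕ) else 0) * (min ((t+d)+t-a) (t+d) + 1 - ((t+d)+t-a-(t+d)))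
      = (∑ a ∈ range t, ((d+1) + a)) + ∑ i ∈ range (d+1), ((t+1) + i) := by
    rw [Finset.range_eq_Ico, ← Finset.sum_Ico_consecutive _ (Nat.zero_le t) (by omega : t ≤ t+(d+1)),
      ← Finset.range_eq_Ico, Finset.sum_Ico_eq_sum_range]
    congr 1
    · apply Finset.sum_congr rfl
      intro a ha
      simp only [Finset.mem_range] at ha
      rw [if_pos (by omega)]
      have hm : min ((t+d)+t-a) (t+d) = t + d := by omega
      rw [hm]
      omega
    · rw [← Finset.sum_range_reflect (fun i => (t+1) + i) _]
      apply Finset.sum_congr (by rw [Nat.add_sub_cancel_left])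
      intro i hi
      simp only [Finset.mem_range] at hi
      rw [if_pos (by omega)]
      have hm : min ((t+d)+t-(t+i)) (t+d) = t + d - i := by omega
      rw [hm]
      omega
  rw [e2]
  push_cast
  rw [mul_add, sumZ, sumZ]
  push_cast
  ring

theorem stmt_18 (s t : ℕ) (hs : 1 ≤ s) (ht : 1 ≤ t) (hts : t ≤ s) :
    (ordMultinomial 3 s ((s : ℤ) + t) : ℤ) - ordMultinomial 3 s ((s : ℤ) + t - (s + 1)) =
      ((s : ℤ) - t + 1) * ((s : ℤ) + 2 * t + 1) + (t : ℤ) * ((t : ℤ) - 3) / 2 -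
        (s : ℤ) * ((s : ℤ) + 1) / 2 := by
  have h1 : (0:ℤ) ≤ (s:ℤ) + t := by positivity
  have h2 : (0:ℤ) ≤ (s:ℤ) + t - ((s:ℤ) + 1) := by omega
  rw [ordMultinomial, ordMultinomial, if_pos h1, if_pos h2]
  have e1 : ((s:ℤ) + t).toNat = s + t := by omega
  have e2 : ((s:ℤ) + t - ((s:ℤ) + 1)).toNat = t - 1 := by omega
  rw [e1, e2]
  have hA := claim_high s t ht hts
  have hB := claim_low s (t-1) (by omega)
  have hC := claim_low s (s-1) (by omega)
  rw [show ((t-1:ℕ):ℤ) = (t:ℤ) - 1 by omega] at hB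
  rw [show ((s-1:ℕ):ℤ) = (s:ℤ) - 1 by omega] at hC
  have hB' : 2 * ((((∑ i ∈ range (s+1), (X : Polynomial ℕ) ^ i))^3).coeff (t-1) : ℤ)
      = t * (t+1) := by rw [hB]; ring
  have hC' : 2 * ((((∑ i ∈ range (s+1), (X : Polynomial ℕ) ^ i))^3).coeff (s-1) : ℤ)
      = s * (s+1) := by rw [hC]; ring
  push_cast at hA hB' hC' ⊢
  have hdiv1 : (t:ℤ) * ((t:ℤ) - 3) / 2
      = ((((∑ i ∈ range (s+1), (X : Polynomial ℕ) ^ i))^3).coeff (t-1) : ℤ) - 2*t := by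
    rw [show (t:ℤ) * ((t:ℤ) - 3)
        = 2 * (((((∑ i ∈ range (s+1), (X : Polynomial ℕ) ^ i))^3).coeff (t-1) : ℤ) - 2*t) by
      linear_combination -hB']
    rw [Int.mul_ediv_cancel_left _ (by norm_num)]
  have hdiv2 : (s:ℤ) * ((s:ℤ) + 1) / 2
      = ((((∑ i ∈ range (s+1), (X : Polynomial ℕ) ^ i))^3).coeff (s-1) : ℤ) := by
    rw [show (s:ℤ) * ((s:ℤ) + 1)
        = 2 * ((((∑ i ∈ range (s+1), (X : Polynomial ℕ) ^ i))^3).coeff (s-1) : ℤ) by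
      linear_combination -hC']
    rw [Int.mul_ediv_cancel_left _ (by norm_num)]
  rw [hdiv1, hdiv2]
  have key : ((s:ℤ)+t+2)*((s:ℤ)+t+1) - 4*((t:ℤ)*((t:ℤ)+1))
      = 2*(((s:ℤ)-t+1)*((s:ℤ)+2*t+1)) + (t:ℤ)*((t:ℤ)+1) - 4*t - (s:ℤ)*((s:ℤ)+1) := by ring
  linarith [hA, hB', hC', key]
end

section
/- For N ≥ 4 and s ≥ 1, the smallest k such that ⟨N,k⟩_s − ⟨N,k−(s+1)⟩_s ≤ k is k = ⌊s(N+1)/2⌋ + 1; that is, ⟨N,k⟩_s − ⟨N,k−(s+1)⟩_s > k for all k ≤ ⌊s(N+1)/2⌋, and ⟨N,k⟩_s − ⟨N,k−(s+1)⟩_s ≤ k at k = ⌊s(N+1)/2⌋ + 1. -/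
namespace Stmt19Aux
open Polynomial Finset

lemma ord_neg (N s : ℕ) {k : ℤ} (h : k < 0) : ordMultinomial N s k = 0 := by
  simp [ordMultinomial, not_le.2 h]

lemma coeff_P (s j : ℕ) : ((∑ i ∈ Finset.range (s+1), (X:Polynomial ℕ)^i)).coeff j = if j ≤ s then 1 else 0 := by
  rw [Polynomial.finset_sum_coeff]
  simp [Polynomial.coeff_X_pow, Nat.lt_succ_iff]


lemma ord_rec (N s : ℕ) (k : ℤ) :
    (ordMultinomial (N+1) s k : ℤ) = ∑ j ∈ Finset.range (s+1), (ordMultinomial N s (k - j) : ℤ) := by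
  rcases lt_or_ge k 0 with hk | hk
  · rw [ord_neg _ _ hk]
    rw [Finset.sum_congr rfl (fun j _ => by rw [ord_neg N s (by omega : k - (j:ℤ) < 0)])]
    simp
  · set n := k.toNat with hn
    have hkn : k = (n : ℤ) := (Int.toNat_of_nonneg hk).symm
    set c : ℕ → ℕ := fun m => (((∑ i ∈ Finset.range (s+1), (X:Polynomial ℕ)^i))^N).coeff m with hc
    have step1 : (ordMultinomial (N+1) s k : ℕ) = ∑ i ∈ range (n+1), c (n-i) * (if i ≤ s then 1 else 0) := by
      rw [ordMultinomial, if_pos hk, pow_succ, Polynomial.coeff_mul,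
        Finset.Nat.sum_antidiagonal_eq_sum_range_succ_mk]
      rw [← Finset.sum_range_reflect]
      apply Finset.sum_congr rfl
      intro i hi
      rw [Finset.mem_range] at hi
      have h1 : n + 1 - 1 - i = n - i := by omega
      have h2 : n - (n - i) = i := by omega
      rw [h1, h2, coeff_P]
    rw [step1]
    push_cast
    have lhs_eq : ∑ i ∈ range (n+1), (c (n-i) : ℤ) * (if i ≤ s then (1:ℤ) else 0)
        = ∑ i ∈ range (max (n+1) (s+1)), (if i ≤ s ∧ i ≤ n then (c (n-i) : ℤ) else 0) := by
      rw [Finset.sum_congr rfl (fun i hi => ?_)]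
      · apply Finset.sum_subset (Finset.range_subset_range.2 (le_max_left _ _))
        intro x _ hx
        rw [Finset.mem_range, not_lt] at hx
        rw [if_neg (by omega)]
      · rw [Finset.mem_range] at hi
        by_cases h : i ≤ s
        · rw [if_pos h, if_pos ⟨h, by omega⟩, mul_one]
        · rw [if_neg h, if_neg (by tauto), mul_zero]
    have rhs_eq : ∑ j ∈ range (s+1), (ordMultinomial N s (k - j) : ℤ)
        = ∑ i ∈ range (max (n+1) (s+1)), (if i ≤ s ∧ i ≤ n then (c (n-i) : ℤ) else 0) := by
      rw [Finset.sum_congr rfl (fun j hj => ?_)]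
      · apply Finset.sum_subset (Finset.range_subset_range.2 (le_max_right _ _))
        intro x _ hx
        rw [Finset.mem_range, not_lt] at hx
        rw [if_neg (by omega)]
      · rw [Finset.mem_range] at hj
        by_cases h : j ≤ n
        · rw [if_pos ⟨by omega, h⟩, ordMultinomial, if_pos (by omega : (0:ℤ) ≤ k - j)]
          congr 2
          omega
        · rw [if_neg (by tauto), ord_neg N s (by omega : k - (j:ℤ) < 0)]
          simp
    rw [lhs_eq, rhs_eq]

lemma sum_Icc_eq_range (f : ℤ → ℤ) (a : ℤ) (n : ℕ) :
    ∑ m ∈ Finset.Icc a (a + n - 1), f m = ∑ i ∈ Finset.range n, f (a + i) := by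
  induction n with
  | zero =>
    rw [Finset.range_zero, Finset.sum_empty, Finset.Icc_eq_empty (by omega)]
    rfl
  | succ n ih =>
    have hins : Finset.Icc a (a + (n+1 : ℕ) - 1) = insert (a + n) (Finset.Icc a (a + n - 1)) := by
      ext x
      simp only [Finset.mem_Icc, Finset.mem_insert]
      push_cast
      omega
    rw [hins, Finset.sum_insert (by simp only [Finset.mem_Icc]; omega),
      Finset.sum_range_succ, ih]
    ring


lemma ord_sym (N s : ℕ) (k : ℤ) : ordMultinomial N s (s*N - k) = ordMultinomial N s k := by
  induction N generalizing k with
  | zero =>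
    rw [show ((s:ℤ)*(0:ℕ) - k) = -k by push_cast; ring]
    rcases lt_trichotomy k 0 with h | h | h
    · rw [ord_neg _ _ h, ordMultinomial, if_pos (by omega : (0:ℤ) ≤ -k)]
      rw [pow_zero, Polynomial.coeff_one, if_neg (by omega)]
    · subst h; norm_num
    · rw [ord_neg _ _ (by omega : -k < 0), ordMultinomial, if_pos h.le]
      rw [pow_zero, Polynomial.coeff_one, if_neg (by omega)]
  | succ N ih =>
    have key : (ordMultinomial (N+1) s ((s:ℤ)*(N+1) - k) : ℤ) = (ordMultinomial (N+1) s k : ℤ) := by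
      rw [show ((s:ℤ)*((N:ℤ)+1) - k) = ((s:ℤ)*(N+1:ℕ) - k) by push_cast; ring]
      rw [ord_rec, ord_rec]
      rw [← Finset.sum_range_reflect (fun j => (ordMultinomial N s (k - j) : ℤ)) (s+1)]
      apply Finset.sum_congr rfl
      intro j hj
      rw [Finset.mem_range] at hj
      have h1 : (s:ℤ)*((N:ℕ)+1:ℕ) - k - j = (s:ℤ)*N - (k - ((s + 1 - 1 - j : ℕ) : ℤ)) := by
        have : ((s + 1 - 1 - j : ℕ) : ℤ) = (s:ℤ) - j := by omega
        rw [this]; push_cast; ring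
      rw [h1, ih]
    have h2 : ((s:ℤ)*((N+1:ℕ):ℤ) - k) = (s:ℤ)*((N:ℤ)+1) - k := by push_cast; ring
    rw [← h2] at key
    exact_mod_cast key

noncomputable def F (N s : ℕ) (k : ℤ) : ℤ :=
  (ordMultinomial N s k : ℤ) - (ordMultinomial N s (k - (s+1)) : ℤ)

lemma F_neg {N s : ℕ} {k : ℤ} (h : k < 0) : F N s k = 0 := by
  rw [F, ord_neg _ _ h, ord_neg _ _ (by omega : k - ((s:ℤ)+1) < 0)]; simp

lemma F_antisym (N s : ℕ) (k : ℤ) : F N s ((s:ℤ)*(N+1)+1 - k) = - F N s k := by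
  rw [F, F]
  rw [show (s:ℤ)*((N:ℤ)+1)+1 - k - ((s:ℤ)+1) = (s:ℤ)*N - k by ring]
  rw [show (s:ℤ)*((N:ℤ)+1)+1 - k = (s:ℤ)*N - (k - ((s:ℤ)+1)) by ring]
  rw [ord_sym, ord_sym]
  ring

lemma F_rec (N s : ℕ) (k : ℤ) :
    F (N+1) s k = ∑ j ∈ Finset.range (s+1), F N s (k - j) := by
  rw [F, ord_rec, ord_rec, ← Finset.sum_sub_distrib]
  apply Finset.sum_congr rfl
  intro j _
  rw [F]
  congr 2
  ring

lemma F_window (N s : ℕ) {k : ℤ} (h0 : 0 ≤ k) (h2 : 2*k ≤ s*(N+2)) :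
    F (N+1) s k = ∑ m ∈ Finset.Icc (k - s) (min k ((s:ℤ)*(N+1) - k)), F N s m := by
  have base : F (N+1) s k = ∑ m ∈ Finset.Icc (k - s) k, F N s m := by
    rw [F_rec, ← Finset.sum_range_reflect]
    have hr := sum_Icc_eq_range (F N s) (k - s) (s+1)
    rw [show (k - (s:ℤ) + ((s+1:ℕ):ℤ) - 1) = k by push_cast; ring] at hr
    rw [hr]
    apply Finset.sum_congr rfl
    intro j hj
    rw [Finset.mem_range] at hj
    congr 1
    have : ((s + 1 - 1 - j : ℕ) : ℤ) = (s:ℤ) - j := by omega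
    rw [this]
    push_cast
    ring
  rw [base]
  rcases le_or_gt k ((s:ℤ)*(N+1) - k) with h | h
  · rw [min_eq_left h]
  · rw [min_eq_right h.le]
    set U : ℤ := (s:ℤ)*(N+1) - k with hU
    have hsplit : Finset.Icc (k - (s:ℤ)) k = Finset.Icc (k - (s:ℤ)) U ∪ Finset.Ioc U k := by
      ext x
      simp only [Finset.mem_Icc, Finset.mem_Ioc, Finset.mem_union]
      have hh : 2*k ≤ (s:ℤ)*((N:ℤ)+2) := by push_cast at h2 ⊢; omega
      have hcb : (s:ℤ)*((N:ℤ)+2) = (s:ℤ)*((N:ℤ)+1) + s := by ring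
      omega
    rw [hsplit, Finset.sum_union (by
      rw [Finset.disjoint_left]
      intro a ha hb
      rw [Finset.mem_Icc] at ha; rw [Finset.mem_Ioc] at hb; omega)]
    have hzero : ∑ m ∈ Finset.Ioc U k, F N s m = 0 := by
      apply Finset.sum_involution (fun m _ => (s:ℤ)*(N+1) + 1 - m)
      · intro m hm
        have := F_antisym N s m
        rw [this]; ring
      · intro m hm hne heq
        have hcen : (s:ℤ)*(N+1) + 1 - m = m := heq
        have := F_antisym N s m
        rw [hcen] at this
        exact hne (by linarith)
      · intro m hm
        rw [Finset.mem_Ioc] at hm ⊢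
        constructor
        · omega
        · have hh : 2*k ≤ (s:ℤ)*((N:ℤ)+2) := by push_cast at h2 ⊢; omega
          have hcb : (s:ℤ)*((N:ℤ)+2) = (s:ℤ)*((N:ℤ)+1) + s := by ring
          omega
      · intro m hm; ring
    rw [hzero, add_zero]

lemma sumlin (n : ℕ) (c d : ℤ) :
    2 * ∑ i ∈ Finset.range n, (c + d*i) = n*(2*c + d*((n:ℤ)-1)) := by
  induction n with
  | zero => simp
  | succ n ih => rw [Finset.sum_range_succ, mul_add, ih]; push_cast; ring

lemma sumquad (n : ℕ) (c d e : ℤ) :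
    6 * ∑ i ∈ Finset.range n, (c + d*i + e*i*i) = n*(6*c + 3*d*((n:ℤ)-1) + e*((n:ℤ)-1)*(2*(n:ℤ)-1)) := by
  induction n with
  | zero => simp
  | succ n ih => rw [Finset.sum_range_succ, mul_add, ih]; push_cast; ring

lemma F1_eq (s : ℕ) {k : ℤ} (h0 : 0 ≤ k) (h1 : k ≤ s) : F 1 s k = 1 := by
  rw [F, ord_neg _ _ (by omega : k - ((s:ℤ)+1) < 0)]
  rw [ordMultinomial, if_pos h0, pow_one, coeff_P, if_pos (by omega)]
  simp


lemma F2_eq (s : ℕ) {k : ℤ} (h0 : 0 ≤ k) (h2 : 2*k ≤ 3*s) :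
    F 2 s k = min k (2*(s:ℤ) - k) - max 0 (k - s) + 1 := by
  have hw := F_window 1 s h0 (by push_cast; omega)
  rw [show ((s:ℤ)*((1:ℕ)+1) - k) = 2*(s:ℤ) - k by push_cast; ring] at hw
  set U : ℤ := min k (2*(s:ℤ) - k) with hUdef
  set L : ℤ := max 0 (k - s) with hLdef
  have hLU : L ≤ U := by omega
  have hUs : U ≤ s := by omega
  have hsub : ∑ m ∈ Finset.Icc L U, F 1 s m = ∑ m ∈ Finset.Icc (k - (s:ℤ)) U, F 1 s m := by
    apply Finset.sum_subset (Finset.Icc_subset_Icc (by omega) le_rfl)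
    intro x hx hnx
    rw [Finset.mem_Icc] at hx hnx
    exact F_neg (by omega)
  have hone : ∑ m ∈ Finset.Icc L U, F 1 s m = ∑ m ∈ Finset.Icc L U, 1 := by
    apply Finset.sum_congr rfl
    intro m hm
    rw [Finset.mem_Icc] at hm
    exact F1_eq s (by omega) (by omega)
  rw [hw, ← hsub, hone, Finset.sum_const, Int.card_Icc]
  have : ((U + 1 - L).toNat : ℤ) = U + 1 - L := Int.toNat_of_nonneg (by omega)
  simp only [nsmul_eq_mul, mul_one]
  omega

lemma F3_low (s : ℕ) {m : ℤ} (h0 : 0 ≤ m) (hms : m ≤ s) :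
    2 * F 3 s m = (m+1)*(m+2) := by
  have hw := F_window 2 s h0 (by push_cast; omega)
  have hmin : min m ((s:ℤ)*((2:ℕ)+1) - m) = m := by
    rw [min_eq_left]; push_cast; omega
  rw [hmin] at hw
  have hsub : ∑ j ∈ Finset.Icc 0 m, F 2 s j = ∑ j ∈ Finset.Icc (m - (s:ℤ)) m, F 2 s j := by
    apply Finset.sum_subset (Finset.Icc_subset_Icc (by omega) le_rfl)
    intro x hx hnx
    rw [Finset.mem_Icc] at hx hnx
    exact F_neg (by omega)
  have hvals : ∑ j ∈ Finset.Icc 0 m, F 2 s j = ∑ j ∈ Finset.Icc 0 m, (j + 1) := by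
    apply Finset.sum_congr rfl
    intro j hj
    rw [Finset.mem_Icc] at hj
    rw [F2_eq s hj.1 (by omega), min_eq_left (by omega), max_eq_left (by omega)]
    ring
  have hr := sum_Icc_eq_range (fun j => j + 1) 0 (m+1).toNat
  have hcast : ((m+1).toNat : ℤ) = m + 1 := Int.toNat_of_nonneg (by omega)
  rw [show (0 : ℤ) + ((m+1).toNat : ℤ) - 1 = m by omega] at hr
  have hvals2 : ∑ i ∈ Finset.range (m+1).toNat, ((0:ℤ) + (i:ℤ) + 1) = ∑ i ∈ Finset.range (m+1).toNat, ((1:ℤ) + 1*i) := by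
    apply Finset.sum_congr rfl; intro i _; ring
  have l1 := sumlin (m+1).toNat 1 1
  rw [hw, ← hsub, hvals, hr, hvals2]
  rw [hcast] at l1
  linear_combination l1

lemma F3_high (s : ℕ) {m : ℤ} (hsm : (s:ℤ) ≤ m) (h2 : m ≤ 2*(s:ℤ)) :
    2 * F 3 s m = ((s:ℤ)+1)*((s:ℤ)+2) - (m-s)*(m-s+1) + 2*(m-s)*(2*(s:ℤ)-m) := by
  have h0 : (0:ℤ) ≤ m := by omega
  have hw := F_window 2 s h0 (by push_cast; omega)
  rw [show ((s:ℤ)*((2:ℕ)+1) - m) = 3*(s:ℤ) - m by push_cast; ring] at hw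
  set V : ℤ := min m (3*(s:ℤ) - m) with hV
  have hVs : (s:ℤ) ≤ V := by omega
  have hsplit : Finset.Icc (m - (s:ℤ)) V = Finset.Icc (m - (s:ℤ)) s ∪ Finset.Icc ((s:ℤ)+1) V := by
    ext x
    simp only [Finset.mem_Icc, Finset.mem_union]
    omega
  rw [hw, hsplit, Finset.sum_union (by
    rw [Finset.disjoint_left]
    intro a ha hb
    rw [Finset.mem_Icc] at ha hb
    omega)]
  have e1 : ∑ j ∈ Finset.Icc (m - (s:ℤ)) s, F 2 s j = ∑ j ∈ Finset.Icc (m - (s:ℤ)) s, (j + 1) := by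
    apply Finset.sum_congr rfl
    intro j hj
    rw [Finset.mem_Icc] at hj
    rw [F2_eq s (by omega) (by omega), min_eq_left (by omega), max_eq_left (by omega)]
    ring
  have e2 : ∑ j ∈ Finset.Icc ((s:ℤ)+1) V, F 2 s j = ∑ j ∈ Finset.Icc ((s:ℤ)+1) V, (3*(s:ℤ) - 2*j + 1) := by
    apply Finset.sum_congr rfl
    intro j hj
    rw [Finset.mem_Icc] at hj
    rw [F2_eq s (by omega) (by omega), min_eq_right (by omega), max_eq_right (by omega)]
    ring
  rw [e1, e2]
  have hr1 := sum_Icc_eq_range (fun j => j + 1) (m - s) (2*s - m + 1).toNat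
  have hc1 : (((2*(s:ℤ) - m + 1).toNat : ℤ)) = 2*(s:ℤ) - m + 1 := Int.toNat_of_nonneg (by omega)
  rw [show (m - (s:ℤ) + ((2*(s:ℤ) - m + 1).toNat : ℤ) - 1) = s by omega] at hr1
  have hr2 := sum_Icc_eq_range (fun j => 3*(s:ℤ) - 2*j + 1) ((s:ℤ)+1) (V - s).toNat
  have hc2 : (((V - (s:ℤ)).toNat : ℤ)) = V - s := Int.toNat_of_nonneg (by omega)
  rw [show ((s:ℤ) + 1 + ((V - (s:ℤ)).toNat : ℤ) - 1) = V by omega] at hr2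
  rw [hr1, hr2]
  have l1 := sumlin (2*(s:ℤ) - m + 1).toNat (m - s + 1) 1
  have l2 := sumlin (V - (s:ℤ)).toNat ((s:ℤ) - 1) (-2)
  have hv1 : ∑ i ∈ Finset.range (2*(s:ℤ) - m + 1).toNat, (m - (s:ℤ) + (i:ℤ) + 1) = ∑ i ∈ Finset.range (2*(s:ℤ) - m + 1).toNat, ((m - (s:ℤ) + 1) + 1*i) := by
    apply Finset.sum_congr rfl; intro i _; ring
  have hv2 : ∑ i ∈ Finset.range (V - (s:ℤ)).toNat, (3*(s:ℤ) - 2*((s:ℤ)+1+(i:ℤ)) + 1) = ∑ i ∈ Finset.range (V - (s:ℤ)).toNat, (((s:ℤ) - 1) + (-2)*i) := by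
    apply Finset.sum_congr rfl; intro i _; ring
  rw [hv1, hv2]
  rw [hc1] at l1
  rw [hc2] at l2
  rcases le_total m (3*(s:ℤ) - m) with hc | hc
  · have hVm : V = m := by rw [hV, min_eq_left hc]
    rw [hVm] at l2 ⊢
    linear_combination l1 + l2
  · have hVm : V = 3*(s:ℤ) - m := by rw [hV, min_eq_right hc]
    rw [hVm] at l2 ⊢
    linear_combination l1 + l2

lemma F4_base (s : ℕ) (hs : 1 ≤ s) {k : ℤ} (h0 : 0 ≤ k) (h2 : 2*k ≤ 5*s) :
    k * min k (5*(s:ℤ) - 2*k) + k + 1 ≤ F 4 s k := by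
  have hw := F_window 3 s h0 (by push_cast; omega)
  rw [show ((s:ℤ)*((3:ℕ)+1) - k) = 4*(s:ℤ) - k by push_cast; ring] at hw
  rcases le_or_gt k s with hks | hks
  · -- Case (i): k ≤ s
    have hmin : min k (4*(s:ℤ) - k) = k := min_eq_left (by omega)
    rw [hmin] at hw
    have hsub : ∑ m ∈ Finset.Icc 0 k, F 3 s m = ∑ m ∈ Finset.Icc (k - (s:ℤ)) k, F 3 s m := by
      apply Finset.sum_subset (Finset.Icc_subset_Icc (by omega) le_rfl)
      intro x hx hnx
      rw [Finset.mem_Icc] at hx hnx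
      exact F_neg (by omega)
    have hterm : ∀ m ∈ Finset.Icc (0:ℤ) k, 2*m + 1 ≤ F 3 s m := by
      intro m hm
      rw [Finset.mem_Icc] at hm
      have h3 := F3_low s hm.1 (by omega)
      have hmm : 0 ≤ (m - 1) * m := by
        rcases lt_or_ge m 1 with h | h
        · have : m = 0 := by omega
          simp [this]
        · exact mul_nonneg (by omega) (by omega)
      nlinarith [h3, hmm]
    have hsumlow : ∑ m ∈ Finset.Icc (0:ℤ) k, (2*m + 1) ≤ ∑ m ∈ Finset.Icc (0:ℤ) k, F 3 s m :=
      Finset.sum_le_sum hterm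
    have hval : ∑ m ∈ Finset.Icc (0:ℤ) k, (2*m + 1) = (k+1)*(k+1) := by
      have hr := sum_Icc_eq_range (fun m => 2*m + 1) 0 (k+1).toNat
      have hc : (((k+1).toNat : ℤ)) = k + 1 := Int.toNat_of_nonneg (by omega)
      rw [show ((0:ℤ) + ((k+1).toNat : ℤ) - 1) = k by omega] at hr
      rw [hr]
      have hv : ∑ i ∈ Finset.range (k+1).toNat, (2*((0:ℤ)+(i:ℤ)) + 1) = ∑ i ∈ Finset.range (k+1).toNat, ((1:ℤ) + 2*i) := by
        apply Finset.sum_congr rfl; intro i _; ring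
      have l := sumlin (k+1).toNat 1 2
      rw [hc] at l
      rw [hv]
      linarith [l]
    have hminfin : min k (5*(s:ℤ) - 2*k) = k := min_eq_left (by omega)
    rw [hminfin, hw, ← hsub]
    nlinarith [hsumlow, hval]
  · rcases le_or_gt k (2*(s:ℤ)) with hk2 | hk2
    · -- Case (ii): s < k ≤ 2s
      have hmin : min k (4*(s:ℤ) - k) = k := min_eq_left (by omega)
      rw [hmin] at hw
      set a : ℤ := k - s with ha
      have ha1 : 1 ≤ a := by omega
      have has : a ≤ s := by omega
      have hsplit : Finset.Icc (k - (s:ℤ)) k = Finset.Icc (k - (s:ℤ)) s ∪ Finset.Icc ((s:ℤ)+1) k := by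
        ext x; simp only [Finset.mem_Icc, Finset.mem_union]; omega
      rw [hsplit, Finset.sum_union (by
        rw [Finset.disjoint_left]; intro x hx hy
        rw [Finset.mem_Icc] at hx hy; omega)] at hw
      -- 2*A closed form
      have hA : 12 * ∑ m ∈ Finset.Icc (k - (s:ℤ)) s, F 3 s m
          = ((s:ℤ)-a+1)*(6*((a+1)*(a+2)) + 3*(2*a+3)*(((s:ℤ)-a+1)-1) + (((s:ℤ)-a+1)-1)*(2*((s:ℤ)-a+1)-1)) := by
        have e1 : ∑ m ∈ Finset.Icc (k - (s:ℤ)) s, (2 * F 3 s m) = ∑ m ∈ Finset.Icc (k - (s:ℤ)) s, ((m+1)*(m+2)) := by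
          apply Finset.sum_congr rfl
          intro m hm
          rw [Finset.mem_Icc] at hm
          exact F3_low s (by omega) (by omega)
        have hr := sum_Icc_eq_range (fun m => (m+1)*(m+2)) (k - s) ((s:ℤ)-a+1).toNat
        have hc : ((((s:ℤ)-a+1).toNat : ℤ)) = (s:ℤ)-a+1 := Int.toNat_of_nonneg (by omega)
        rw [show (k - (s:ℤ) + ((((s:ℤ)-a+1).toNat : ℤ)) - 1) = s by omega] at hr
        have hv : ∑ i ∈ Finset.range ((s:ℤ)-a+1).toNat, ((k - (s:ℤ) + i + 1)*(k - (s:ℤ) + i + 2))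
            = ∑ i ∈ Finset.range ((s:ℤ)-a+1).toNat, ((a+1)*(a+2) + (2*a+3)*i + 1*(i:ℤ)*i) := by
          apply Finset.sum_congr rfl; intro i _; rw [ha]; ring
        have l := sumquad ((s:ℤ)-a+1).toNat ((a+1)*(a+2)) (2*a+3) 1
        rw [hc] at l
        rw [hv] at hr
        calc 12 * ∑ m ∈ Finset.Icc (k - (s:ℤ)) s, F 3 s m
            = 6 * ∑ m ∈ Finset.Icc (k - (s:ℤ)) s, (2 * F 3 s m) := by rw [Finset.mul_sum, Finset.mul_sum]; apply Finset.sum_congr rfl; intro m _; ring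
          _ = 6 * ∑ m ∈ Finset.Icc (k - (s:ℤ)) s, ((m+1)*(m+2)) := by rw [e1]
          _ = 6 * ∑ i ∈ Finset.range ((s:ℤ)-a+1).toNat, ((a+1)*(a+2) + (2*a+3)*i + 1*(i:ℤ)*i) := by rw [hr]
          _ = _ := by rw [l]; ring
      have hB : 12 * ∑ m ∈ Finset.Icc ((s:ℤ)+1) k, F 3 s m
          = a*(6*((s:ℤ)*(s:ℤ)+5*(s:ℤ)-2) + 3*(2*(s:ℤ)-7)*(a-1) + (-3)*(a-1)*(2*a-1)) := by
        have e2 : ∑ m ∈ Finset.Icc ((s:ℤ)+1) k, (2 * F 3 s m) = ∑ m ∈ Finset.Icc ((s:ℤ)+1) k, (((s:ℤ)+1)*((s:ℤ)+2) - (m-s)*(m-s+1) + 2*(m-s)*(2*(s:ℤ)-m)) := by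
          apply Finset.sum_congr rfl
          intro m hm
          rw [Finset.mem_Icc] at hm
          exact F3_high s (by omega) (by omega)
        have hr := sum_Icc_eq_range (fun m => ((s:ℤ)+1)*((s:ℤ)+2) - (m-s)*(m-s+1) + 2*(m-s)*(2*(s:ℤ)-m)) ((s:ℤ)+1) a.toNat
        have hc : ((a.toNat : ℤ)) = a := Int.toNat_of_nonneg (by omega)
        rw [show ((s:ℤ) + 1 + ((a.toNat : ℤ)) - 1) = k by omega] at hr
        have hv : ∑ i ∈ Finset.range a.toNat, (((s:ℤ)+1)*((s:ℤ)+2) - (((s:ℤ)+1+i)-s)*(((s:ℤ)+1+i)-s+1) + 2*(((s:ℤ)+1+i)-s)*(2*(s:ℤ)-((s:ℤ)+1+i)))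
            = ∑ i ∈ Finset.range a.toNat, (((s:ℤ)*(s:ℤ)+5*(s:ℤ)-2) + (2*(s:ℤ)-7)*i + (-3)*(i:ℤ)*i) := by
          apply Finset.sum_congr rfl; intro i _; ring
        have l := sumquad a.toNat ((s:ℤ)*(s:ℤ)+5*(s:ℤ)-2) (2*(s:ℤ)-7) (-3)
        rw [hc] at l
        rw [hv] at hr
        calc 12 * ∑ m ∈ Finset.Icc ((s:ℤ)+1) k, F 3 s m
            = 6 * ∑ m ∈ Finset.Icc ((s:ℤ)+1) k, (2 * F 3 s m) := by rw [Finset.mul_sum, Finset.mul_sum]; apply Finset.sum_congr rfl; intro m _; ring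
          _ = 6 * ∑ i ∈ Finset.range a.toNat, (((s:ℤ)*(s:ℤ)+5*(s:ℤ)-2) + (2*(s:ℤ)-7)*i + (-3)*(i:ℤ)*i) := by rw [e2, hr]
          _ = _ := by rw [l]
      rcases le_total k (5*(s:ℤ) - 2*k) with hm | hm
      · rw [min_eq_left hm, hw]
        nlinarith [hA, hB, mul_nonneg (by omega : (0:ℤ) ≤ (s:ℤ)-a) (by omega : (0:ℤ) ≤ a-1),
          mul_nonneg (by omega : (0:ℤ) ≤ (s:ℤ)-a) (by omega : (0:ℤ) ≤ (s:ℤ)-a),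
          mul_nonneg (by omega : (0:ℤ) ≤ a-1) (by omega : (0:ℤ) ≤ a-1),
          mul_nonneg (mul_nonneg (by omega : (0:ℤ) ≤ (s:ℤ)-a) (by omega : (0:ℤ) ≤ a-1)) (by omega : (0:ℤ) ≤ a)]
      · rw [min_eq_right hm, hw]
        have h3a : 2*(s:ℤ) ≤ 3*a := by omega
        nlinarith [hA, hB, mul_nonneg (by omega : (0:ℤ) ≤ (s:ℤ)-a) (by omega : (0:ℤ) ≤ 3*a-2*(s:ℤ)),
          mul_nonneg (by omega : (0:ℤ) ≤ (s:ℤ)-a) (by omega : (0:ℤ) ≤ (s:ℤ)-1),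
          mul_nonneg (by omega : (0:ℤ) ≤ a-1) (by omega : (0:ℤ) ≤ 3*a-2*(s:ℤ)),
          mul_nonneg (mul_nonneg (by omega : (0:ℤ) ≤ (s:ℤ)-a) (by omega : (0:ℤ) ≤ 3*a-2*(s:ℤ))) (by omega : (0:ℤ) ≤ a),
          mul_nonneg (by omega : (0:ℤ) ≤ (s:ℤ)-a) (by omega : (0:ℤ) ≤ a)]
    · -- Case (iii): 2s < k
      have hs2 : 2 ≤ s := by omega
      have hmin : min k (4*(s:ℤ) - k) = 4*(s:ℤ) - k := min_eq_right (by omega)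
      rw [hmin] at hw
      have hterm : ∀ m ∈ Finset.Icc (k - (s:ℤ)) (4*(s:ℤ) - k), (k+1 : ℤ) ≤ F 3 s m := by
        intro m hm
        rw [Finset.mem_Icc] at hm
        have hu1 : (s:ℤ) + 1 ≤ m := by omega
        have hu2 : m ≤ 2*(s:ℤ) - 1 := by omega
        have h3 := F3_high s (show (s:ℤ) ≤ m by omega) (show m ≤ 2*(s:ℤ) by omega)
        have hk3 : k ≤ 3*(s:ℤ) - (m - s) := by omega
        nlinarith [h3, mul_nonneg (by omega : (0:ℤ) ≤ m - s - 1) (by omega : (0:ℤ) ≤ (s:ℤ) - 1 - (m - s)),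
          mul_nonneg (by omega : (0:ℤ) ≤ (s:ℤ) - 1 - (m-s)) (by omega : (0:ℤ) ≤ (s:ℤ) - 2)]
      have hsum : ∑ m ∈ Finset.Icc (k - (s:ℤ)) (4*(s:ℤ) - k), (k+1 : ℤ) ≤ ∑ m ∈ Finset.Icc (k - (s:ℤ)) (4*(s:ℤ) - k), F 3 s m :=
        Finset.sum_le_sum hterm
      rw [Finset.sum_const, Int.card_Icc, nsmul_eq_mul] at hsum
      have hc : (((4*(s:ℤ) - k + 1 - (k - s)).toNat : ℤ)) = 5*(s:ℤ) - 2*k + 1 := by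
        rw [Int.toNat_of_nonneg (by omega)]; ring
      rw [hc] at hsum
      rw [min_eq_right (by omega : 5*(s:ℤ) - 2*k ≤ k), hw]
      nlinarith [hsum]

lemma step (s N : ℕ) (hs : 1 ≤ s) (hN : 4 ≤ N)
    (IH : ∀ m : ℤ, 0 ≤ m → 2*m ≤ (s:ℤ)*((N:ℤ)+1) → m * min m ((s:ℤ)*((N:ℤ)+1) - 2*m) + m + 1 ≤ F N s m)
    {k : ℤ} (h0 : 0 ≤ k) (h2 : 2*k ≤ (s:ℤ)*((N:ℤ)+2)) :
    k * min k ((s:ℤ)*((N:ℤ)+2) - 2*k) + k + 1 ≤ F (N+1) s k := by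
  set W : ℤ := (s:ℤ)*((N:ℤ)+1) with hWdef
  have hW5 : 5*(s:ℤ) ≤ W := by
    rw [hWdef]
    have : (5:ℤ) ≤ (N:ℤ)+1 := by exact_mod_cast by omega
    nlinarith [this, (by exact_mod_cast Nat.zero_le s : (0:ℤ) ≤ s)]
  have hWs : (s:ℤ)*((N:ℤ)+2) = W + s := by rw [hWdef]; ring
  have hw := F_window N s h0 (by push_cast at h2 ⊢; omega)
  rw [hWs] at h2 ⊢
  rw [show ((s:ℤ)*((N:ℤ)+1)) = W from rfl] at hw
  rcases le_or_gt (3*k) W with hI | hI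
  · -- Case I
    have hU : min k (W - k) = k := min_eq_left (by omega)
    rw [hU] at hw
    have hnn : ∀ m ∈ Finset.Icc (k - (s:ℤ)) k, (0:ℤ) ≤ F N s m := by
      intro m hm
      rw [Finset.mem_Icc] at hm
      rcases lt_or_ge m 0 with h | h
      · rw [F_neg h]
      · have := IH m h (by omega)
        have hmin0 : (0:ℤ) ≤ min m (W - 2*m) := le_min h (by omega)
        nlinarith [this, mul_nonneg h hmin0]
    have hsingle := Finset.single_le_sum hnn (by rw [Finset.mem_Icc]; omega : k ∈ Finset.Icc (k - (s:ℤ)) k)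
    have hIHk := IH k h0 (by omega)
    rw [min_eq_left (by omega : k ≤ W - 2*k)] at hIHk
    have htar : k * min k (W + s - 2*k) ≤ k * k :=
      mul_le_mul_of_nonneg_left (min_le_left _ _) h0
    rw [hw]
    linarith [hsingle, hIHk, htar]
  · rcases le_or_gt (2*k) W with hII | hIII
    · -- Case II
      set r : ℤ := W - 2*k with hr
      have hka : (s:ℤ) + 1 ≤ k := by omega
      have hU : min k (W - k) = k := min_eq_left (by omega)
      rw [hU] at hw
      rcases le_or_gt k (r + s) with hIIb | hIIa
      · -- II.b : bound min ≥ k - s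
        have hterm : ∀ m ∈ Finset.Icc (k - (s:ℤ)) k, m*(k - s) + m + 1 ≤ F N s m := by
          intro m hm
          rw [Finset.mem_Icc] at hm
          have h0m : (0:ℤ) ≤ m := by omega
          have := IH m h0m (by omega)
          have hmin : k - (s:ℤ) ≤ min m (W - 2*m) := le_min (by omega) (by omega)
          nlinarith [this, mul_le_mul_of_nonneg_left hmin h0m]
        have hsum := Finset.sum_le_sum hterm
        have hval : ∑ m ∈ Finset.Icc (k - (s:ℤ)) k, (m*(k - s) + m + 1)
            = ∑ i ∈ Finset.range (s+1), (((k-s)*(k-s+1) + 1) + (k-s+1)*i) := by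
          have hrr := sum_Icc_eq_range (fun m => m*(k - s) + m + 1) (k - s) (s+1)
          rw [show (k - (s:ℤ) + ((s+1:ℕ):ℤ) - 1) = k by push_cast; ring] at hrr
          rw [hrr]
          apply Finset.sum_congr rfl; intro i _; ring
        have l := sumlin (s+1) ((k-s)*(k-s+1) + 1) (k-s+1)
        rw [min_eq_left (by omega : k ≤ W + s - 2*k), hw]
        push_cast at l
        have h2S : ((s:ℤ)+1) * (2*((k-s)*(k-s+1) + 1) + (k-s+1)*((s:ℤ)+1-1)) ≤ 2 * ∑ m ∈ Finset.Icc (k - (s:ℤ)) k, F N s m := by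
          linarith [hsum, hval.symm ▸ hsum, l, hval]
        have hinner : (0:ℤ) ≤ 2*(k-s)*(k-s) - (k-s) + 1 + (s:ℤ)*((k-s) - 1) := by
          nlinarith [mul_nonneg (by omega : (0:ℤ) ≤ k-s-1) (by omega : (0:ℤ) ≤ k-s),
            mul_nonneg (by omega : (0:ℤ) ≤ (s:ℤ)) (by omega : (0:ℤ) ≤ k-s-1)]
        have key : (0:ℤ) ≤ (s:ℤ) * (2*(k-s)*(k-s) - (k-s) + 1 + (s:ℤ)*((k-s) - 1)) :=
          mul_nonneg (by omega) hinner
        have hD : ((s:ℤ)+1) * (2*((k-s)*(k-s+1) + 1) + (k-s+1)*((s:ℤ)+1-1)) - 2*(k*k + k + 1)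
            = (s:ℤ) * (2*(k-s)*(k-s) - (k-s) + 1 + (s:ℤ)*((k-s) - 1)) := by ring
        linarith [h2S, key, hD]
      · rcases lt_or_ge 0 r with hr1 | hr0
        · -- II.a with r ≥ 1
          have hterm : ∀ m ∈ Finset.Icc (k - (s:ℤ)) k, m*r + m + 1 ≤ F N s m := by
            intro m hm
            rw [Finset.mem_Icc] at hm
            have h0m : (0:ℤ) ≤ m := by omega
            have := IH m h0m (by omega)
            have hmin : r ≤ min m (W - 2*m) := le_min (by omega) (by omega)
            nlinarith [this, mul_le_mul_of_nonneg_left hmin h0m]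
          have hsum := Finset.sum_le_sum hterm
          have hval : ∑ m ∈ Finset.Icc (k - (s:ℤ)) k, (m*r + m + 1)
              = ∑ i ∈ Finset.range (s+1), (((k-s)*(r+1) + 1) + (r+1)*i) := by
            have hrr := sum_Icc_eq_range (fun m => m*r + m + 1) (k - s) (s+1)
            rw [show (k - (s:ℤ) + ((s+1:ℕ):ℤ) - 1) = k by push_cast; ring] at hrr
            rw [hrr]
            apply Finset.sum_congr rfl; intro i _; ring
          have l := sumlin (s+1) ((k-s)*(r+1) + 1) (r+1)
          rw [min_eq_right (by omega : W + s - 2*k ≤ k), hw]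
          push_cast at l
          have hobj : W + s - 2*k = r + s := by omega
          rw [hobj]
          have h2S : ((s:ℤ)+1) * (2*((k-s)*(r+1) + 1) + (r+1)*((s:ℤ)+1-1)) ≤ 2 * ∑ m ∈ Finset.Icc (k - (s:ℤ)) k, F N s m := by
            linarith [hsum, l, hval]
          have hprod : (2*k - (s:ℤ) - 1) ≤ r*(2*k - (s:ℤ) - 1) := le_mul_of_one_le_left (by omega) (by omega)
          have key : (0:ℤ) ≤ (s:ℤ) * (r*(2*k - (s:ℤ) - 1) - (s:ℤ) + 1) :=
            mul_nonneg (by omega) (by linarith [hprod])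
          have hD : ((s:ℤ)+1) * (2*((k-s)*(r+1) + 1) + (r+1)*((s:ℤ)+1-1)) - 2*(k*(r+(s:ℤ)) + k + 1)
              = (s:ℤ) * (r*(2*k - (s:ℤ) - 1) - (s:ℤ) + 1) := by ring
          linarith [h2S, key, hD]
        · -- II.a with r = 0, i.e. W = 2k
          have hr0' : r = 0 := by omega
          have hks2 : 2 ≤ k - s := by omega
          have hsplit : Finset.Icc (k - (s:ℤ)) k = Finset.Icc (k - (s:ℤ)) (k-1) ∪ Finset.Icc k k := by
            ext x; simp only [Finset.mem_Icc, Finset.mem_union]; omega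
          rw [hsplit, Finset.sum_union (by
            rw [Finset.disjoint_left]; intro x hx hy
            rw [Finset.mem_Icc] at hx hy; omega)] at hw
          have hterm : ∀ m ∈ Finset.Icc (k - (s:ℤ)) (k-1), 3*m + 1 ≤ F N s m := by
            intro m hm
            rw [Finset.mem_Icc] at hm
            have h0m : (0:ℤ) ≤ m := by omega
            have := IH m h0m (by omega)
            have hmin : 2 ≤ min m (W - 2*m) := le_min (by omega) (by omega)
            nlinarith [this, mul_le_mul_of_nonneg_left hmin h0m]
          have hsum := Finset.sum_le_sum hterm
          have hval : ∑ m ∈ Finset.Icc (k - (s:ℤ)) (k-1), (3*m + 1)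
              = ∑ i ∈ Finset.range s, ((3*(k-s) + 1) + 3*i) := by
            have hrr := sum_Icc_eq_range (fun m => 3*m + 1) (k - s) s
            rw [show (k - (s:ℤ) + ((s:ℕ):ℤ) - 1) = k - 1 by push_cast; ring] at hrr
            rw [hrr]
            apply Finset.sum_congr rfl; intro i _; ring
          have l := sumlin s (3*(k-s) + 1) 3
          have hlast : k + 1 ≤ ∑ m ∈ Finset.Icc k k, F N s m := by
            rw [Finset.Icc_self, Finset.sum_singleton]
            have := IH k h0 (by omega)
            have hmin : min k (W - 2*k) = 0 := by
              rw [show W - 2*k = 0 by omega]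
              exact min_eq_right h0
            rw [hmin] at this
            linarith
          rw [min_eq_right (by omega : W + s - 2*k ≤ k), hw]
          have hobj : W + s - 2*k = s := by omega
          rw [hobj]
          push_cast at l
          have h2S : ((s:ℤ)) * (2*(3*(k-s) + 1) + 3*((s:ℤ)-1)) ≤ 2 * ∑ m ∈ Finset.Icc (k - (s:ℤ)) (k-1), F N s m := by
            linarith [hsum, l, hval]
          have key : (0:ℤ) ≤ (s:ℤ) * (4*k - 3*(s:ℤ) - 1) :=
            mul_nonneg (by omega) (by omega)
          have hD : ((s:ℤ)) * (2*(3*(k-s) + 1) + 3*((s:ℤ)-1)) + 2*(k+1) - 2*(k*(s:ℤ) + k + 1)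
              = (s:ℤ) * (4*k - 3*(s:ℤ) - 1) := by ring
          linarith [h2S, key, hD, hlast]
    · -- Case III
      have hU : min k (W - k) = W - k := min_eq_right (by omega)
      rw [hU] at hw
      have hterm : ∀ m ∈ Finset.Icc (k - (s:ℤ)) (W - k), k + 1 ≤ F N s m := by
        intro m hm
        rw [Finset.mem_Icc] at hm
        have h0m : (0:ℤ) ≤ m := by omega
        have hms : (s:ℤ) ≤ m := by omega
        have := IH m h0m (by omega)
        have hmin : 1 ≤ min m (W - 2*m) := le_min (by omega) (by omega)
        nlinarith [this, mul_le_mul_of_nonneg_left hmin h0m]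
      have hsum := Finset.sum_le_sum hterm
      rw [Finset.sum_const, Int.card_Icc, nsmul_eq_mul] at hsum
      have hc : (((W - k + 1 - (k - s)).toNat : ℤ)) = W + s - 2*k + 1 := by
        rw [Int.toNat_of_nonneg (by omega)]; ring
      rw [hc] at hsum
      rw [min_eq_right (by omega : W + s - 2*k ≤ k), hw]
      have hD : (W + (s:ℤ) - 2*k + 1)*(k+1) - (k*(W + (s:ℤ) - 2*k) + k + 1) = W + (s:ℤ) - 2*k := by ring
      have hge : (0:ℤ) ≤ W + (s:ℤ) - 2*k := by omega
      linarith [hsum, hD, hge]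

lemma mainInv (s : ℕ) (hs : 1 ≤ s) :
    ∀ N : ℕ, 4 ≤ N → ∀ k : ℤ, 0 ≤ k → 2*k ≤ (s:ℤ)*((N:ℤ)+1) →
      k * min k ((s:ℤ)*((N:ℤ)+1) - 2*k) + k + 1 ≤ F N s k := by
  intro N hN
  induction N, hN using Nat.le_induction with
  | base =>
    intro k h0 h2
    have h2' : 2*k ≤ 5*(s:ℤ) := by push_cast at h2; linarith
    have := F4_base s hs h0 h2'
    have hmineq : min k ((s:ℤ)*(((4:ℕ):ℤ)+1) - 2*k) = min k (5*(s:ℤ) - 2*k) := by norm_num [mul_comm]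
    rw [hmineq]
    linarith [this]
  | succ n hn ih =>
    intro k h0 h2
    have hcast : ((s:ℤ))*(((n+1:ℕ):ℤ)+1) = (s:ℤ)*((n:ℤ)+2) := by push_cast; ring
    rw [hcast] at h2 ⊢
    exact step s n hs hn (fun m hm0 hm2 => ih m hm0 hm2) h0 h2

end Stmt19Aux

theorem stmt_19 (N s : ℕ) (hN : 4 ≤ N) (hs : 1 ≤ s) :
    (∀ k : ℤ, 0 ≤ k → k ≤ (s * (N + 1)) / 2 →
        k < (ordMultinomial N s k : ℤ) - ordMultinomial N s (k - (s + 1))) ∧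
      (ordMultinomial N s (((s * (N + 1)) / 2 : ℕ) + 1) : ℤ) -
          ordMultinomial N s ((((s * (N + 1)) / 2 : ℕ) + 1 : ℤ) - (s + 1)) ≤
        ((s * (N + 1)) / 2 : ℕ) + 1 := by
  constructor
  · intro k h0 hhalf
    have h2 : 2*k ≤ (s:ℤ)*((N:ℤ)+1) := by
      have : k ≤ ((s:ℤ) * ((N:ℤ) + 1)) / 2 := by push_cast at hhalf ⊢; omega
      omega
    have hmain := Stmt19Aux.mainInv s hs N hN k h0 h2
    have hminnn : (0:ℤ) ≤ min k ((s:ℤ)*((N:ℤ)+1) - 2*k) := le_min h0 (by omega)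
    have hF : (k:ℤ) < Stmt19Aux.F N s k := by
      nlinarith [hmain, mul_nonneg h0 hminnn]
    rw [Stmt19Aux.F] at hF
    exact hF
  · set Q : ℕ := (s * (N + 1)) / 2 with hQ
    set K : ℤ := (Q:ℤ) + 1 with hK
    have hQ2 : 2*(Q:ℤ) ≤ (s:ℤ)*((N:ℤ)+1) ∧ (s:ℤ)*((N:ℤ)+1) ≤ 2*(Q:ℤ)+1 := by
      constructor <;> · push_cast [hQ]; omega
    have hgoal : Stmt19Aux.F N s K ≤ K := by
      rcases eq_or_lt_of_le hQ2.1 with heven | hodd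
      ·
        have hanti := Stmt19Aux.F_antisym N s K
        have harg : (s:ℤ)*((N:ℤ)+1) + 1 - K = (Q:ℤ) := by omega
        rw [harg] at hanti
        have hmain := Stmt19Aux.mainInv s hs N hN (Q:ℤ) (by positivity) (by omega)
        have hminnn : (0:ℤ) ≤ min (Q:ℤ) ((s:ℤ)*((N:ℤ)+1) - 2*(Q:ℤ)) := le_min (by positivity) (by omega)
        have hFQ : (0:ℤ) < Stmt19Aux.F N s (Q:ℤ) := by
          nlinarith [hmain, mul_nonneg (by positivity : (0:ℤ) ≤ (Q:ℤ)) hminnn]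
        -- hanti : F (Q) = - F (K)
        have : Stmt19Aux.F N s K = - Stmt19Aux.F N s (Q:ℤ) := by linarith [hanti]
        rw [this]
        have : (0:ℤ) ≤ K := by positivity
        linarith
      · -- s(N+1) = 2Q+1 : K is the center
        have hcen : (s:ℤ)*((N:ℤ)+1) = 2*(Q:ℤ) + 1 := by omega
        have hanti := Stmt19Aux.F_antisym N s K
        have harg : (s:ℤ)*((N:ℤ)+1) + 1 - K = K := by omega
        rw [harg] at hanti
        have hzero : Stmt19Aux.F N s K = 0 := by linarith [hanti]
        rw [hzero]
        positivity
    rw [Stmt19Aux.F] at hgoal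
    convert hgoal using 3 <;> push_cast <;> ring
end
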